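/- arXiv:1305.5261 — 2 statements merged into one kernel-verified Lean document; each statement's English description precedes it below -/
import Mathlib

section
/- For each s ∈ ℝ there is a constant C_s such that for every integer k ≥ 0 and every smooth compactly supported ψ : ℝ×S² → ℝ one has ||χ_k ⟨x⟩^{-s} ψ||_{L²} ≤ C_s 2^{(1/2−s)k} ||χ_0 ψ||_{L²} + C_s 2^{(1/2−s)k} ( ∫∫_{1≤|x|≤2^{k+1}} |ψ ∂_x ψ| dx dV_{S²} )^{1/2}, with C_s independent of k and ψ. -/
open MeasureTheory

noncomputable section

/-- The unit sphere `S² ⊂ ℝ³`. -/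
abbrev Sph2 := Metric.sphere (0 : EuclideanSpace ℝ (Fin 3)) 1

/-- The standard surface measure `dV_{S²}` on the unit sphere. -/
def sphMeas : Measure Sph2 := (volume : Measure (EuclideanSpace ℝ (Fin 3))).toSphere

/-- The `L²(A × S², dx dV_{S²})` norm of a function on `ℝ × S²`, for `A ⊆ ℝ`. -/
def L2nrm (A : Set ℝ) (f : ℝ → Sph2 → ℝ) : ℝ :=
  Real.sqrt (∫ x in A, ∫ ω, f x ω ^ 2 ∂sphMeas)

/-- The set `{2^k ≤ |x| ≤ 2^{k+1}}` whose indicator is `χ_k`. -/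
def annAbs (k : ℕ) : Set ℝ := {x : ℝ | (2 : ℝ) ^ k ≤ |x| ∧ |x| ≤ (2 : ℝ) ^ (k + 1)}

/-- The derivative `∂_x ψ` in the first variable. -/
def pdx (ψ : ℝ → Sph2 → ℝ) (x : ℝ) (ω : Sph2) : ℝ := deriv (fun y => ψ y ω) x

/-- The Japanese bracket `⟨x⟩ = (1+x²)^{1/2}`. -/
def jap (x : ℝ) : ℝ := Real.sqrt (1 + x ^ 2)

/-- Smoothness of `ψ : ℝ × S² → ℝ`, encoded as the restriction of a smooth function
on `ℝ × ℝ³`. -/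
def SmoothOnCyl (ψ : ℝ → Sph2 → ℝ) : Prop :=
  ∃ Ψ : ℝ × EuclideanSpace ℝ (Fin 3) → ℝ, ContDiff ℝ (⊤ : ℕ∞) Ψ ∧ ∀ (x : ℝ) (ω : Sph2), ψ x ω = Ψ (x, ω)

-- AUX START
lemma my_sqrt_add_le {x y : ℝ} (hx : 0 ≤ x) (hy : 0 ≤ y) :
    Real.sqrt (x + y) ≤ Real.sqrt x + Real.sqrt y := by
  have h : x + y ≤ (Real.sqrt x + Real.sqrt y) ^ 2 := by
    nlinarith [Real.sq_sqrt hx, Real.sq_sqrt hy, Real.sqrt_nonneg x, Real.sqrt_nonneg y]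
  calc Real.sqrt (x + y) ≤ Real.sqrt ((Real.sqrt x + Real.sqrt y) ^ 2) := Real.sqrt_le_sqrt h
    _ = Real.sqrt x + Real.sqrt y := Real.sqrt_sq (by positivity)

lemma absAnn_isCompact (a b : ℝ) : IsCompact {t : ℝ | a ≤ |t| ∧ |t| ≤ b} := by
  apply IsCompact.of_isClosed_subset (isCompact_Icc (a := -b) (b := b))
  · exact (isClosed_le continuous_const continuous_abs).inter
      (isClosed_le continuous_abs continuous_const)
  · intro t ht
    exact abs_le.mp ht.2

lemma absAnn_measurableSet (a b : ℝ) : MeasurableSet {t : ℝ | a ≤ |t| ∧ |t| ≤ b} :=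
  ((isClosed_le continuous_const continuous_abs).inter
      (isClosed_le continuous_abs continuous_const)).measurableSet

lemma annAbs_eq (k : ℕ) : annAbs k = {t : ℝ | (2:ℝ)^k ≤ |t| ∧ |t| ≤ (2:ℝ)^(k+1)} := rfl

/-- FTC oscillation bound: if `uIcc a b ⊆ B` then `g b ^ 2 ≤ g a ^ 2 + 2 ∫_B |g g'|`. -/
lemma osc_bound (g : ℝ → ℝ) (hg : ContDiff ℝ (⊤ : ℕ∞) g) {B : Set ℝ} (hB : IsCompact B)
    (a b : ℝ) (hab : Set.uIcc a b ⊆ B) :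
    g b ^ 2 ≤ g a ^ 2 + 2 * ∫ t in B, |g t * deriv g t| := by
  have hgc : Continuous g := hg.continuous
  have hg' : Continuous (deriv g) := hg.continuous_deriv (by simp)
  have hsq : ∀ x, deriv (fun y => g y ^ 2) x = 2 * (g x * deriv g x) := by
    intro x
    have h1 : HasDerivAt g (deriv g x) x :=
      ((hg.differentiable (by simp)) x).hasDerivAt
    have h2 : HasDerivAt (fun y => g y ^ 2) (2 * g x ^ (2-1) * deriv g x) x := by
      simpa using h1.fun_pow 2
    simpa [mul_assoc] using h2.deriv
  have hdiff : ∀ x ∈ Set.uIcc a b, DifferentiableAt ℝ (fun y => g y ^ 2) x := by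
    intro x _
    exact ((hg.differentiable (by simp)) x).pow 2
  have hint : IntervalIntegrable (deriv (fun y => g y ^ 2)) volume a b := by
    have : Continuous fun x => 2 * (g x * deriv g x) := by continuity
    exact ((by simpa [funext hsq] using this : Continuous (deriv fun y => g y ^ 2))).intervalIntegrable a b
  have hFTC : ∫ y in a..b, deriv (fun y => g y ^ 2) y = g b ^ 2 - g a ^ 2 :=
    intervalIntegral.integral_deriv_eq_sub hdiff hint
  have hIB : IntegrableOn (fun t => |g t * deriv g t|) B volume :=
    ((hgc.mul hg').abs.continuousOn).integrableOn_compact hB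
  have habs : |g b ^ 2 - g a ^ 2| ≤ 2 * ∫ t in B, |g t * deriv g t| := by
    rw [← hFTC]
    calc |∫ y in a..b, deriv (fun y => g y ^ 2) y|
        ≤ ∫ y in Set.uIoc a b, |deriv (fun y => g y ^ 2) y| := by
          simpa [Real.norm_eq_abs] using
            intervalIntegral.norm_integral_le_integral_norm_uIoc
              (f := deriv (fun y => g y ^ 2)) (a := a) (b := b) (μ := volume)
      _ = ∫ y in Set.uIoc a b, 2 * |g y * deriv g y| := by
          congr 1; ext y; rw [hsq]; rw [abs_mul]; simp [abs_of_nonneg]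
      _ = 2 * ∫ y in Set.uIoc a b, |g y * deriv g y| := by
          rw [integral_const_mul]
      _ ≤ 2 * ∫ t in B, |g t * deriv g t| := by
          apply mul_le_mul_of_nonneg_left _ (by norm_num)
          apply setIntegral_mono_set hIB
          · filter_upwards with t using abs_nonneg _
          · exact ((Set.uIoc_subset_uIcc.trans hab)).eventuallyLE
  nlinarith [abs_le.mp habs]

lemma trace_bound (g : ℝ → ℝ) (hg : ContDiff ℝ (⊤ : ℕ∞) g) (k : ℕ) (x : ℝ)
    (hx : x ∈ annAbs k) :
    g x ^ 2 ≤ (∫ y in annAbs 0, g y ^ 2) +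
      2 * ∫ t in {t : ℝ | 1 ≤ |t| ∧ |t| ≤ (2:ℝ)^(k+1)}, |g t * deriv g t| := by
  set B : Set ℝ := {t : ℝ | 1 ≤ |t| ∧ |t| ≤ (2:ℝ)^(k+1)} with hBdef
  have hBc : IsCompact B := absAnn_isCompact _ _
  set D : ℝ := ∫ t in B, |g t * deriv g t| with hDdef
  have hD0 : 0 ≤ D := setIntegral_nonneg (absAnn_measurableSet _ _) (fun t _ => abs_nonneg _)
  have h2k : (1:ℝ) ≤ 2^k := one_le_pow₀ (by norm_num)
  have h2k1 : (2:ℝ) ≤ 2^(k+1) := by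
    calc (2:ℝ) = 2^1 := by norm_num
    _ ≤ 2^(k+1) := pow_le_pow_right₀ (by norm_num) (by omega)
  obtain ⟨hx1, hx2⟩ := hx
  -- the averaging interval
  obtain ⟨J, hJc, hJm, hJvol, hJkey, hJsub⟩ :
      ∃ J : Set ℝ, IsCompact J ∧ MeasurableSet J ∧ (volume J).toReal = 1 ∧
        (∀ y ∈ J, g x ^ 2 ≤ g y ^ 2 + 2 * D) ∧ J ⊆ annAbs 0 := by
    rcases le_or_gt 0 x with hx0 | hx0
    · have hxa : |x| = x := abs_of_nonneg hx0
      rw [hxa] at hx1 hx2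
      refine ⟨Set.Icc (1:ℝ) 2, isCompact_Icc, measurableSet_Icc, by rw [Real.volume_Icc]; norm_num, ?_, ?_⟩
      · intro y hy
        apply osc_bound g hg hBc y x
        intro t ht
        rw [Set.uIcc_eq_union] at ht
        have h1t : (1:ℝ) ≤ t := by
          rcases ht with h | h
          · rcases Set.mem_Icc.mp h with ⟨h1, _⟩; linarith [hy.1]
          · rcases Set.mem_Icc.mp h with ⟨h1, _⟩; linarith
        have h2t : t ≤ (2:ℝ)^(k+1) := by
          rcases ht with h | h
          · rcases Set.mem_Icc.mp h with ⟨_, h2⟩; linarith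
          · rcases Set.mem_Icc.mp h with ⟨_, h2⟩; linarith [hy.2]
        exact ⟨by rw [abs_of_nonneg (by linarith)]; exact h1t,
          by rw [abs_of_nonneg (by linarith)]; exact h2t⟩
      · intro y hy
        rcases Set.mem_Icc.mp hy with ⟨h1, h2⟩
        exact ⟨by rw [pow_zero, abs_of_nonneg (by linarith)]; exact h1,
          by rw [abs_of_nonneg (by linarith)]; simpa using h2⟩
    · have hxa : |x| = -x := abs_of_neg hx0
      rw [hxa] at hx1 hx2
      refine ⟨Set.Icc (-2:ℝ) (-1), isCompact_Icc, measurableSet_Icc, by rw [Real.volume_Icc]; norm_num, ?_, ?_⟩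
      · intro y hy
        apply osc_bound g hg hBc y x
        intro t ht
        rw [Set.uIcc_eq_union] at ht
        rcases Set.mem_Icc.mp hy with ⟨hy1, hy2⟩
        have h1t : t ≤ -1 := by
          rcases ht with h | h
          · rcases Set.mem_Icc.mp h with ⟨_, h2⟩; linarith
          · rcases Set.mem_Icc.mp h with ⟨_, h2⟩; linarith
        have h2t : -(2:ℝ)^(k+1) ≤ t := by
          rcases ht with h | h
          · rcases Set.mem_Icc.mp h with ⟨h1, _⟩; linarith
          · rcases Set.mem_Icc.mp h with ⟨h1, _⟩; linarith
        exact ⟨by rw [abs_of_neg (by linarith)]; linarith,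
          by rw [abs_of_neg (by linarith)]; linarith⟩
      · intro y hy
        rcases Set.mem_Icc.mp hy with ⟨h1, h2⟩
        exact ⟨by rw [pow_zero, abs_of_neg (by linarith)]; linarith,
          by rw [abs_of_neg (by linarith)]; simpa using by linarith⟩
  -- averaging over J
  have hintJ : IntegrableOn (fun y => g y ^ 2 + 2 * D) J volume :=
    (((hg.continuous.pow 2).add continuous_const).continuousOn).integrableOn_compact hJc
  have hintJ2 : IntegrableOn (fun y => g y ^ 2) J volume :=
    ((hg.continuous.pow 2).continuousOn).integrableOn_compact hJc
  have hconst : IntegrableOn (fun _ : ℝ => g x ^ 2) J volume := by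
    apply (integrableOn_const_iff).mpr
    right
    exact hJc.measure_lt_top
  have hstep : g x ^ 2 ≤ (∫ y in J, g y ^ 2) + 2 * D := by
    have h1 : (∫ _ in J, g x ^ 2) ≤ ∫ y in J, (g y ^ 2 + 2 * D) :=
      setIntegral_mono_on hconst hintJ hJm hJkey
    rw [setIntegral_const, measureReal_def, hJvol, one_smul] at h1
    rw [integral_add hintJ2 ((integrableOn_const_iff).mpr (Or.inr hJc.measure_lt_top))] at h1
    rw [setIntegral_const, measureReal_def, hJvol, one_smul] at h1
    exact h1
  have hann0 : (∫ y in J, g y ^ 2) ≤ ∫ y in annAbs 0, g y ^ 2 := by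
    apply setIntegral_mono_set
    · exact ((hg.continuous.pow 2).continuousOn).integrableOn_compact
        (by rw [annAbs_eq]; exact absAnn_isCompact _ _)
    · filter_upwards with t using sq_nonneg _
    · exact hJsub.eventuallyLE
  linarith

lemma jap_ge (x : ℝ) : |x| ≤ jap x := by
  rw [jap, ← Real.sqrt_sq_eq_abs]
  exact Real.sqrt_le_sqrt (by nlinarith)

lemma jap_pos (x : ℝ) : 0 < jap x := Real.sqrt_pos.mpr (by positivity)

lemma jap_bound (t : ℝ) (k : ℕ) (x : ℝ) (hx : x ∈ annAbs k) :
    jap x ^ t ≤ max 1 ((2:ℝ) ^ (2*t)) * (((2:ℝ)^k : ℝ)) ^ t := by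
  set a : ℝ := (2:ℝ)^k with ha
  have ha1 : (1:ℝ) ≤ a := one_le_pow₀ (by norm_num)
  have ha0 : (0:ℝ) < a := by linarith
  obtain ⟨hx1, hx2⟩ := hx
  have hx2' : |x| ≤ 2*a := by rw [pow_succ] at hx2; linarith
  have hlow : a ≤ jap x := le_trans hx1 (jap_ge x)
  have hhigh : jap x ≤ 4*a := by
    rw [jap]
    calc Real.sqrt (1 + x^2) ≤ Real.sqrt ((4*a)^2) := by
          apply Real.sqrt_le_sqrt
          have := abs_nonneg x
          nlinarith [sq_abs x]
      _ = 4*a := Real.sqrt_sq (by linarith)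
  rcases le_or_gt 0 t with ht | ht
  · have h4 : (4:ℝ)^t = (2:ℝ)^(2*t) := by
      rw [show (4:ℝ) = (2:ℝ)^(2:ℕ) by norm_num, ← Real.rpow_natCast (2:ℝ) 2,
        ← Real.rpow_mul (by norm_num : (0:ℝ) ≤ 2)]
      norm_num
    calc jap x ^ t ≤ (4*a)^t :=
          Real.rpow_le_rpow (le_of_lt (jap_pos x)) hhigh ht
      _ = (4:ℝ)^t * a^t := Real.mul_rpow (by norm_num) (le_of_lt ha0)
      _ = (2:ℝ)^(2*t) * a^t := by rw [h4]
      _ ≤ max 1 ((2:ℝ)^(2*t)) * a^t :=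
          mul_le_mul_of_nonneg_right (le_max_right _ _) (Real.rpow_nonneg (le_of_lt ha0) t)
  · calc jap x ^ t ≤ a ^ t := Real.rpow_le_rpow_of_nonpos ha0 hlow (le_of_lt ht)
      _ ≤ max 1 ((2:ℝ)^(2*t)) * a^t := le_mul_of_one_le_left
          (Real.rpow_nonneg (le_of_lt ha0) t) (le_max_left _ _)


set_option maxHeartbeats 1000000 in
/-- basic dyadic Hardy estimate, eq. (basic_hardy) of the paper.
For each `s ∈ ℝ` there is `C_s` such that for every `k ≥ 0` and smooth compactly
supported `ψ : ℝ×S² → ℝ`: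
`‖χ_k ⟨x⟩^{-s} ψ‖_{L²} ≤ C_s 2^{(1/2−s)k} ‖χ_0 ψ‖_{L²}
    + C_s 2^{(1/2−s)k} (∫∫_{1≤|x|≤2^{k+1}} |ψ ∂_xψ| dx dV_{S²})^{1/2}`. -/
theorem basic_dyadic_hardy (s : ℝ) :
    ∃ C : ℝ, ∀ k : ℕ, ∀ ψ : ℝ → Sph2 → ℝ, SmoothOnCyl ψ →
      (∃ R : ℝ, ∀ (x : ℝ) (ω : Sph2), R ≤ |x| → ψ x ω = 0) →
      L2nrm (annAbs k) (fun x ω => jap x ^ (-s) * ψ x ω)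
        ≤ C * (2 : ℝ) ^ ((1 / 2 - s) * k) * L2nrm (annAbs 0) ψ
          + C * (2 : ℝ) ^ ((1 / 2 - s) * k) *
            Real.sqrt (∫ x in {x : ℝ | 1 ≤ |x| ∧ |x| ≤ (2 : ℝ) ^ (k + 1)},
              ∫ ω, |ψ x ω * pdx ψ x ω| ∂sphMeas) := by
  classical
  set t : ℝ := -2*s with htdef
  set c : ℝ := max 1 ((2:ℝ)^(2*t)) with hcdef
  have hc1 : (1:ℝ) ≤ c := le_max_left _ _
  have hc0 : (0:ℝ) < c := lt_of_lt_of_le one_pos hc1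
  refine ⟨2 * Real.sqrt c * Real.sqrt 2, ?_⟩
  intro k ψ hsm hcomp
  obtain ⟨Ψ, hΨ, hψΨ⟩ := hsm
  obtain ⟨R, hR⟩ := hcomp
  haveI : IsFiniteMeasure sphMeas := by unfold sphMeas; infer_instance
  -- continuity of ψ and its x-derivative
  have hψc : Continuous fun p : ℝ × Sph2 => ψ p.1 p.2 := by
    have he : (fun p : ℝ × Sph2 => ψ p.1 p.2)
        = fun p : ℝ × Sph2 => Ψ (p.1, (p.2 : EuclideanSpace ℝ (Fin 3))) := by
      funext p; exact hψΨ p.1 p.2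
    rw [he]
    exact hΨ.continuous.comp (continuous_fst.prodMk (continuous_subtype_val.comp continuous_snd))
  have hslice : ∀ ω : Sph2, ContDiff ℝ (⊤ : ℕ∞) (fun y => ψ y ω) := by
    intro ω
    have he : (fun y => ψ y ω) = fun y => Ψ (y, (ω : EuclideanSpace ℝ (Fin 3))) :=
      funext fun y => hψΨ y ω
    rw [he]
    exact hΨ.comp (contDiff_id.prodMk contDiff_const)
  have hpdxeq : ∀ (x : ℝ) (ω : Sph2),
      pdx ψ x ω = fderiv ℝ Ψ (x, (ω : EuclideanSpace ℝ (Fin 3))) (1, 0) := by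
    intro x ω
    have h2 : HasDerivAt
        (fun y : ℝ => ((y, (ω : EuclideanSpace ℝ (Fin 3))) : ℝ × EuclideanSpace ℝ (Fin 3)))
        (1, 0) x := (hasDerivAt_id x).prodMk (hasDerivAt_const x _)
    have h1 : HasFDerivAt Ψ (fderiv ℝ Ψ (x, (ω : EuclideanSpace ℝ (Fin 3))))
        (x, (ω : EuclideanSpace ℝ (Fin 3))) :=
      (hΨ.differentiable (by simp) (x, (ω : EuclideanSpace ℝ (Fin 3)))).hasFDerivAt
    have h3 := h1.comp_hasDerivAt x h2
    have he : (fun y => ψ y ω) = (Ψ ∘ fun y : ℝ => (y, (ω : EuclideanSpace ℝ (Fin 3)))) :=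
      funext fun y => hψΨ y ω
    rw [pdx, he]
    exact h3.deriv
  have hpdxc : Continuous fun p : ℝ × Sph2 => pdx ψ p.1 p.2 := by
    have he : (fun p : ℝ × Sph2 => pdx ψ p.1 p.2)
        = fun p : ℝ × Sph2 => (fderiv ℝ Ψ (p.1, (p.2 : EuclideanSpace ℝ (Fin 3)))) (1, 0) := by
      funext p; exact hpdxeq p.1 p.2
    rw [he]
    exact ((hΨ.continuous_fderiv (by simp)).comp
      (continuous_fst.prodMk (continuous_subtype_val.comp continuous_snd))).clm_apply
      continuous_const
  -- compact support machinery
  set R' : ℝ := max R 1 with hR'def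
  have hzero : ∀ p : ℝ × Sph2,
      p ∉ (Set.Icc (-R') R') ×ˢ (Set.univ : Set Sph2) → ψ p.1 p.2 = 0 := by
    intro p hp
    apply hR
    by_contra h
    push_neg at h
    have : |p.1| < R' := lt_of_lt_of_le h (le_max_left _ _)
    rcases abs_lt.mp this with ⟨h1, h2⟩
    exact hp (Set.mem_prod.mpr ⟨Set.mem_Icc.mpr ⟨by linarith, by linarith⟩, Set.mem_univ _⟩)
  have hK : IsCompact ((Set.Icc (-R') R') ×ˢ (Set.univ : Set Sph2)) :=
    isCompact_Icc.prod isCompact_univ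
  have hsupp : ∀ F : ℝ × Sph2 → ℝ, (∀ p, ψ p.1 p.2 = 0 → F p = 0) → HasCompactSupport F := by
    intro F hF
    apply HasCompactSupport.intro hK
    intro p hp
    exact hF p (hzero p hp)
  -- the three relevant integrands
  have hjapc : Continuous fun x : ℝ => jap x ^ (-s) := by
    have h1 : Continuous jap := by
      unfold jap
      exact Real.continuous_sqrt.comp (continuous_const.add (continuous_pow 2))
    exact h1.rpow_const fun x => Or.inl (ne_of_gt (jap_pos x))
  have hF1c : Continuous fun p : ℝ × Sph2 => ψ p.1 p.2 ^ 2 := hψc.pow 2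
  have hF1s : HasCompactSupport fun p : ℝ × Sph2 => ψ p.1 p.2 ^ 2 :=
    hsupp _ fun p hp => by rw [hp]; ring
  have hF2c : Continuous fun p : ℝ × Sph2 => |ψ p.1 p.2 * pdx ψ p.1 p.2| := (hψc.mul hpdxc).abs
  have hF2s : HasCompactSupport fun p : ℝ × Sph2 => |ψ p.1 p.2 * pdx ψ p.1 p.2| :=
    hsupp _ fun p hp => by rw [hp]; simp
  have hF3c : Continuous fun p : ℝ × Sph2 => (jap p.1 ^ (-s) * ψ p.1 p.2) ^ 2 :=
    ((hjapc.comp continuous_fst).mul hψc).pow 2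
  have hF3s : HasCompactSupport fun p : ℝ × Sph2 => (jap p.1 ^ (-s) * ψ p.1 p.2) ^ 2 :=
    hsupp _ fun p hp => by rw [hp]; ring
  have hint1 : Integrable (fun p : ℝ × Sph2 => ψ p.1 p.2 ^ 2) (volume.prod sphMeas) :=
    hF1c.integrable_of_hasCompactSupport hF1s
  have hint2 : Integrable (fun p : ℝ × Sph2 => |ψ p.1 p.2 * pdx ψ p.1 p.2|)
      (volume.prod sphMeas) := hF2c.integrable_of_hasCompactSupport hF2s
  have hint3 : Integrable (fun p : ℝ × Sph2 => (jap p.1 ^ (-s) * ψ p.1 p.2) ^ 2)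
      (volume.prod sphMeas) := hF3c.integrable_of_hasCompactSupport hF3s
  have hrestr : ∀ (S : Set ℝ) (F : ℝ × Sph2 → ℝ), Integrable F (volume.prod sphMeas) →
      Integrable F ((volume.restrict S).prod sphMeas) := by
    intro S F hF
    rw [show (volume.restrict S).prod sphMeas
        = (volume.prod sphMeas).restrict (S ×ˢ Set.univ) by
      rw [← Measure.prod_restrict, Measure.restrict_univ]]
    exact hF.restrict
  -- key sets and quantities
  set Bk : Set ℝ := {x : ℝ | 1 ≤ |x| ∧ |x| ≤ (2:ℝ)^(k+1)} with hBkdef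
  have hBkm : MeasurableSet Bk := absAnn_measurableSet _ _
  have hannm : ∀ j : ℕ, MeasurableSet (annAbs j) := fun j => absAnn_measurableSet _ _
  have hannc : ∀ j : ℕ, IsCompact (annAbs j) := fun j => absAnn_isCompact _ _
  set N2 : ℝ := ∫ x in annAbs 0, ∫ ω, ψ x ω ^ 2 ∂sphMeas with hN2def
  set I : ℝ := ∫ x in Bk, ∫ ω, |ψ x ω * pdx ψ x ω| ∂sphMeas with hIdef
  have hN2nn : 0 ≤ N2 := setIntegral_nonneg (hannm 0)
    fun x _ => integral_nonneg fun ω => sq_nonneg _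
  have hInn : 0 ≤ I := setIntegral_nonneg hBkm
    fun x _ => integral_nonneg fun ω => abs_nonneg _
  set P : Sph2 → ℝ := fun ω => ∫ y in annAbs 0, ψ y ω ^ 2 with hPdef
  set D : Sph2 → ℝ := fun ω => ∫ x in Bk, |ψ x ω * pdx ψ x ω| with hDdef
  have hPint : Integrable P sphMeas := (hrestr (annAbs 0) _ hint1).integral_prod_right
  have hDint : Integrable D sphMeas := (hrestr Bk _ hint2).integral_prod_right
  have hswapP : (∫ ω, P ω ∂sphMeas) = N2 :=
    (integral_integral_swap_of_hasCompactSupport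
      (f := fun x ω => ψ x ω ^ 2) hF1c hF1s
      (μ := volume.restrict (annAbs 0)) (ν := sphMeas)).symm
  have hswapD : (∫ ω, D ω ∂sphMeas) = I :=
    (integral_integral_swap_of_hasCompactSupport
      (f := fun x ω => |ψ x ω * pdx ψ x ω|) hF2c hF2s
      (μ := volume.restrict Bk) (ν := sphMeas)).symm
  set M : ℝ := N2 + 2 * I with hMdef
  have hM0 : 0 ≤ M := by positivity
  have hGint : Integrable (fun ω => P ω + 2 * D ω) sphMeas := hPint.add (hDint.const_mul 2)
  have hsphere : ∀ x ∈ annAbs k, (∫ ω, ψ x ω ^ 2 ∂sphMeas) ≤ M := by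
    intro x hx
    have h1 : (∫ ω, ψ x ω ^ 2 ∂sphMeas) ≤ ∫ ω, (P ω + 2 * D ω) ∂sphMeas := by
      apply integral_mono_of_nonneg
      · filter_upwards with ω using sq_nonneg _
      · exact hGint
      · filter_upwards with ω using trace_bound _ (hslice ω) k x hx
    have h2 : (∫ ω, (P ω + 2 * D ω) ∂sphMeas) = M := by
      rw [integral_add hPint (hDint.const_mul 2), integral_const_mul, hswapP, hswapD]
    linarith
  -- pointwise bound on the sphere integral of the weighted function
  have hjap2 : ∀ x : ℝ, (jap x ^ (-s)) ^ 2 = jap x ^ t := by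
    intro x
    rw [← Real.rpow_natCast (jap x ^ (-s)) 2, ← Real.rpow_mul (jap_pos x).le]
    congr 1
    rw [htdef]; push_cast; ring
  have houter : ∀ x ∈ annAbs k,
      (∫ ω, (jap x ^ (-s) * ψ x ω) ^ 2 ∂sphMeas) ≤ c * (((2:ℝ)^k : ℝ)) ^ t * M := by
    intro x hx
    have h0 : (∫ ω, (jap x ^ (-s) * ψ x ω) ^ 2 ∂sphMeas)
        = (jap x ^ (-s)) ^ 2 * ∫ ω, ψ x ω ^ 2 ∂sphMeas := by
      simp_rw [mul_pow]
      rw [integral_const_mul]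
    have h1 : (0:ℝ) ≤ ∫ ω, ψ x ω ^ 2 ∂sphMeas := integral_nonneg fun ω => sq_nonneg _
    rw [h0, hjap2 x]
    apply mul_le_mul (jap_bound t k x hx) (hsphere x hx) h1
    exact mul_nonneg hc0.le (Real.rpow_nonneg (by positivity) t)
  -- integrate over the annulus
  have hEint : IntegrableOn (fun x => ∫ ω, (jap x ^ (-s) * ψ x ω) ^ 2 ∂sphMeas)
      (annAbs k) volume := (hrestr (annAbs k) _ hint3).integral_prod_left
  have hvolfin : volume (annAbs k) < ⊤ := (hannc k).measure_lt_top
  set E : ℝ := ∫ x in annAbs k, ∫ ω, (jap x ^ (-s) * ψ x ω) ^ 2 ∂sphMeas with hEdef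
  have hE0 : 0 ≤ E := setIntegral_nonneg (hannm k)
    fun x _ => integral_nonneg fun ω => sq_nonneg _
  have hEb1 : E ≤ (c * (((2:ℝ)^k : ℝ)) ^ t * M) * (volume (annAbs k)).toReal := by
    calc E ≤ ∫ _ in annAbs k, (c * (((2:ℝ)^k : ℝ)) ^ t * M) :=
          setIntegral_mono_on hEint ((integrableOn_const_iff).mpr (Or.inr hvolfin)) (hannm k) houter
      _ = (c * (((2:ℝ)^k : ℝ)) ^ t * M) * (volume (annAbs k)).toReal := by
          rw [setIntegral_const, measureReal_def, smul_eq_mul]; ring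
  have hvol' : (volume (annAbs k)).toReal ≤ (2:ℝ)^(k+2) := by
    have h1 : volume (annAbs k) ≤ volume (Set.Icc (-(2:ℝ)^(k+1)) ((2:ℝ)^(k+1))) :=
      measure_mono fun x hx => abs_le.mp hx.2
    have h2 : (volume (Set.Icc (-(2:ℝ)^(k+1)) ((2:ℝ)^(k+1)))).toReal = (2:ℝ)^(k+2) := by
      rw [Real.volume_Icc, ENNReal.toReal_ofReal (by
        have : (0:ℝ) < 2^(k+1) := by positivity
        linarith)]
      rw [pow_succ]
      ring
    calc (volume (annAbs k)).toReal
        ≤ (volume (Set.Icc (-(2:ℝ)^(k+1)) ((2:ℝ)^(k+1)))).toReal :=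
          ENNReal.toReal_mono (by rw [Real.volume_Icc]; exact ENNReal.ofReal_ne_top) h1
      _ = (2:ℝ)^(k+2) := h2
  have hEb2 : E ≤ c * M * ((((2:ℝ)^k : ℝ)) ^ t * (2:ℝ)^(k+2)) := by
    have hcM : 0 ≤ c * (((2:ℝ)^k : ℝ)) ^ t * M :=
      mul_nonneg (mul_nonneg hc0.le (Real.rpow_nonneg (by positivity) t)) hM0
    calc E ≤ (c * (((2:ℝ)^k : ℝ)) ^ t * M) * (volume (annAbs k)).toReal := hEb1
      _ ≤ (c * (((2:ℝ)^k : ℝ)) ^ t * M) * (2:ℝ)^(k+2) :=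
          mul_le_mul_of_nonneg_left hvol' hcM
      _ = c * M * ((((2:ℝ)^k : ℝ)) ^ t * (2:ℝ)^(k+2)) := by ring
  -- identify the powers of two
  set β : ℝ := (2:ℝ) ^ ((1/2 - s) * (k:ℝ)) with hβdef
  have hβ0 : 0 < β := Real.rpow_pos_of_pos (by norm_num) _
  have hpow : (((2:ℝ)^k : ℝ)) ^ t * (2:ℝ)^(k+2) = 4 * β^2 := by
    rw [← Real.rpow_natCast (2:ℝ) k, ← Real.rpow_mul (by norm_num : (0:ℝ) ≤ 2)]
    rw [← Real.rpow_natCast (2:ℝ) (k+2)]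
    rw [hβdef, ← Real.rpow_natCast ((2:ℝ) ^ ((1/2 - s) * (k:ℝ))) 2,
      ← Real.rpow_mul (by norm_num : (0:ℝ) ≤ 2)]
    rw [← Real.rpow_add (by norm_num : (0:ℝ) < 2)]
    rw [show ((k:ℝ) * t + ((k:ℕ) + 2 : ℕ)) = ((1/2 - s) * (k:ℝ) * 2) + 2 by
      push_cast; rw [htdef]; ring]
    rw [Real.rpow_add (by norm_num : (0:ℝ) < 2)]
    rw [show (2:ℝ) ^ (2:ℝ) = 4 by
      calc (2:ℝ) ^ (2:ℝ) = (2:ℝ) ^ (((2:ℕ)):ℝ) := by norm_num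
        _ = (2:ℝ) ^ (2:ℕ) := Real.rpow_natCast 2 2
        _ = 4 := by norm_num]
    ring
  have hEb3 : E ≤ 4 * c * β^2 * N2 + 4 * c * β^2 * (2 * I) := by
    calc E ≤ c * M * ((((2:ℝ)^k : ℝ)) ^ t * (2:ℝ)^(k+2)) := hEb2
      _ = 4 * c * β^2 * N2 + 4 * c * β^2 * (2 * I) := by rw [hpow, hMdef]; ring
  -- final square-root manipulations
  have hterm1 : Real.sqrt (4 * c * β^2 * N2) = 2 * Real.sqrt c * β * Real.sqrt N2 := by
    rw [show 4 * c * β^2 * N2 = (2 * Real.sqrt c * β)^2 * N2 by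
      rw [mul_pow, mul_pow, Real.sq_sqrt hc0.le]; ring]
    rw [Real.sqrt_mul (sq_nonneg _), Real.sqrt_sq (by positivity)]
  have hterm2 : Real.sqrt (4 * c * β^2 * (2 * I))
      = 2 * Real.sqrt c * Real.sqrt 2 * β * Real.sqrt I := by
    rw [show 4 * c * β^2 * (2 * I) = (2 * Real.sqrt c * β)^2 * (2 * I) by
      rw [mul_pow, mul_pow, Real.sq_sqrt hc0.le]; ring]
    rw [Real.sqrt_mul (sq_nonneg _), Real.sqrt_sq (by positivity),
      Real.sqrt_mul (by norm_num : (0:ℝ) ≤ 2)]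
    ring
  have hL2 : L2nrm (annAbs k) (fun x ω => jap x ^ (-s) * ψ x ω) = Real.sqrt E := rfl
  have hL20 : L2nrm (annAbs 0) ψ = Real.sqrt N2 := rfl
  rw [hL2, hL20]
  calc Real.sqrt E ≤ Real.sqrt (4 * c * β^2 * N2 + 4 * c * β^2 * (2 * I)) :=
        Real.sqrt_le_sqrt hEb3
    _ ≤ Real.sqrt (4 * c * β^2 * N2) + Real.sqrt (4 * c * β^2 * (2 * I)) :=
        my_sqrt_add_le (by positivity) (by positivity)
    _ = 2 * Real.sqrt c * β * Real.sqrt N2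
        + 2 * Real.sqrt c * Real.sqrt 2 * β * Real.sqrt I := by rw [hterm1, hterm2]
    _ ≤ 2 * Real.sqrt c * Real.sqrt 2 * β * Real.sqrt N2
        + 2 * Real.sqrt c * Real.sqrt 2 * β * Real.sqrt I := by
        have h1 : (1:ℝ) ≤ Real.sqrt 2 := by
          rw [show (1:ℝ) = Real.sqrt 1 by simp]
          exact Real.sqrt_le_sqrt (by norm_num)
        have h2 : 0 ≤ 2 * Real.sqrt c * β * Real.sqrt N2 := by positivity
        nlinarith [Real.sqrt_nonneg c, Real.sqrt_nonneg N2, hβ0.le]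
    _ = 2 * Real.sqrt c * Real.sqrt 2 * (2:ℝ) ^ ((1/2 - s) * (k:ℝ)) * Real.sqrt N2
        + 2 * Real.sqrt c * Real.sqrt 2 * (2:ℝ) ^ ((1/2 - s) * (k:ℝ)) * Real.sqrt I := by
        rw [hβdef]


end
end

section
/- For each s > 1/2 there is a constant C_s such that for every 1 ≤ p ≤ ∞, every integer j ≥ 0, and every smooth compactly supported ψ : ℝ×S² → ℝ one has the Hardy–Poincaré estimate ||⟨x⟩^{-s} ψ||_{ℓ^pL²(|x|≤2^j)} ≤ C_s ( ||χ_0 ψ||_{L²} + ||⟨x⟩^{1-s} ∂_x ψ||_{ℓ^pL²(|x|≤2^j)} ), with C_s independent of p, j and ψ. -/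
open MeasureTheory
open scoped ENNReal

noncomputable section

/-- The `ℓ^p` norm (with the usual modification at `p = ∞`) of a nonnegative
sequence `v : ℕ → ℝ`. -/
def lpVec (p : ℝ≥0∞) (v : ℕ → ℝ) : ℝ :=
  if p = ⊤ then ⨆ k, v k else (∑' k, v k ^ p.toReal) ^ (1 / p.toReal)

/-- The finite sequence `(base, a_0, …, a_j, 0, 0, …)` entering the `ℓ^pL²(|x|≤2^j)` norm. -/
def vecOf (j : ℕ) (base : ℝ) (a : ℕ → ℝ) : ℕ → ℝ
  | 0 => base
  | k + 1 => if k ≤ j then a k else 0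

/-- `‖f‖_{ℓ^pL²(|x|≤2^j)} = ( ‖f‖_{L²(|x|<1)}^p + Σ_{k=0}^j ‖χ_k f‖_{L²}^p )^{1/p}`. -/
def lpL2 (p : ℝ≥0∞) (j : ℕ) (f : ℝ → Sph2 → ℝ) : ℝ :=
  lpVec p (vecOf j (L2nrm {x : ℝ | |x| < 1} f) (fun k => L2nrm (annAbs k) f))

namespace HPaux


lemma geom_bound (x : ℝ) (h0 : 0 ≤ x) (h1 : x < 1) (n : ℕ) :
    ∑ i ∈ Finset.range n, x ^ i ≤ (1 - x)⁻¹ := by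
  have hx1 : (0:ℝ) < 1 - x := by linarith
  have hgs : ∑ i ∈ Finset.range n, x ^ i = (1 - x ^ n) / (1 - x) := by
    rw [geom_sum_eq (ne_of_lt h1)]
    rw [div_eq_div_iff (by linarith) (by linarith)]
    ring
  rw [hgs, ← one_div]
  exact (div_le_div_iff_of_pos_right hx1).mpr (by nlinarith [pow_nonneg h0 n])

def toX (p : ℝ≥0∞) (N : ℕ) (v : ℕ → ℝ) : PiLp p (fun _ : Fin N => ℝ) := WithLp.toLp p (fun i : Fin N => v i)

lemma toX_apply (p : ℝ≥0∞) (N : ℕ) (v : ℕ → ℝ) (i : Fin N) : toX p N v i = v i := rfl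

lemma Xsum_apply (p : ℝ≥0∞) (N : ℕ) {ι : Type*} (s : Finset ι)
    (F : ι → PiLp p (fun _ : Fin N => ℝ)) (i : Fin N) :
    (∑ m ∈ s, F m) i = ∑ m ∈ s, F m i := by
  classical
  induction s using Finset.induction_on with
  | empty => simp
  | insert a s h ih =>
    rw [Finset.sum_insert h, Finset.sum_insert h, PiLp.add_apply, ih]

lemma bdd_range (N : ℕ) (v : ℕ → ℝ) (hv0 : ∀ n, 0 ≤ v n) (hvN : ∀ n, N ≤ n → v n = 0) :
    BddAbove (Set.range v) := by
  refine ⟨∑ m ∈ Finset.range N, v m, ?_⟩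
  rintro _ ⟨k, rfl⟩
  by_cases hk : k < N
  · exact Finset.single_le_sum (fun i _ => hv0 i) (Finset.mem_range.mpr hk)
  · rw [hvN k (le_of_not_gt hk)]
    exact Finset.sum_nonneg fun i _ => hv0 i

lemma lpVec_eq_norm (p : ℝ≥0∞) (hp : 1 ≤ p) (N : ℕ) (hN : 0 < N)
    (v : ℕ → ℝ) (hv0 : ∀ n, 0 ≤ v n) (hvN : ∀ n, N ≤ n → v n = 0) :
    lpVec p v = ‖toX p N v‖ := by
  haveI := Fact.mk hp
  haveI : Nonempty (Fin N) := ⟨⟨0, hN⟩⟩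
  rcases eq_or_ne p ⊤ with hT | hT
  · subst hT
    rw [lpVec, if_pos rfl, PiLp.norm_eq_ciSup]
    have hnorm : ∀ i : Fin N, ‖toX ⊤ N v i‖ = v i := fun i => by
      rw [toX_apply, Real.norm_eq_abs, abs_of_nonneg (hv0 i)]
    apply le_antisymm
    · apply ciSup_le; intro k
      by_cases hk : k < N
      · have : v k = ‖toX ⊤ N v ⟨k, hk⟩‖ := (hnorm ⟨k, hk⟩).symm
        rw [this]
        exact le_ciSup (f := fun i : Fin N => ‖toX ⊤ N v i‖) ((Set.finite_range _).bddAbove) _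
      · rw [hvN k (le_of_not_gt hk)]
        refine le_trans (norm_nonneg (toX ⊤ N v ⟨0, hN⟩)) ?_
        exact le_ciSup (f := fun i : Fin N => ‖toX ⊤ N v i‖) ((Set.finite_range _).bddAbove) _
    · apply ciSup_le; intro i
      rw [hnorm i]
      exact le_ciSup (bdd_range N v hv0 hvN) (i : ℕ)
  · have ht0 : 0 < p.toReal := ENNReal.toReal_pos (by intro h; rw [h] at hp; simp at hp) hT
    rw [lpVec, if_neg hT, PiLp.norm_eq_sum ht0]
    congr 1
    rw [tsum_eq_sum (s := Finset.range N)
      (fun b hb => by rw [hvN b (by simpa using hb)]; exact Real.zero_rpow (ne_of_gt ht0))]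
    rw [← Fin.sum_univ_eq_sum_range (fun k => v k ^ p.toReal) N]
    exact Finset.sum_congr rfl fun i _ => by
      rw [toX_apply, Real.norm_eq_abs, abs_of_nonneg (hv0 i)]

lemma norm_toX_mono (p : ℝ≥0∞) (hp : 1 ≤ p) (N : ℕ) (hN : 0 < N)
    {x y : PiLp p (fun _ : Fin N => ℝ)} (h : ∀ i, |x i| ≤ y i) : ‖x‖ ≤ ‖y‖ := by
  haveI := Fact.mk hp
  haveI : Nonempty (Fin N) := ⟨⟨0, hN⟩⟩
  rcases eq_or_ne p ⊤ with hT | hT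
  · subst hT
    rw [PiLp.norm_eq_ciSup, PiLp.norm_eq_ciSup]
    apply ciSup_le; intro i
    refine le_trans ?_ (le_ciSup (f := fun i => ‖y i‖) ((Set.finite_range _).bddAbove) i)
    rw [Real.norm_eq_abs, Real.norm_eq_abs]
    exact (h i).trans (le_abs_self _)
  · have ht0 : 0 < p.toReal := ENNReal.toReal_pos (by intro h'; rw [h'] at hp; simp at hp) hT
    rw [PiLp.norm_eq_sum ht0, PiLp.norm_eq_sum ht0]
    apply Real.rpow_le_rpow (by positivity) ?_ (by positivity)
    apply Finset.sum_le_sum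
    intro i _
    apply Real.rpow_le_rpow (norm_nonneg _) ?_ ht0.le
    rw [Real.norm_eq_abs, Real.norm_eq_abs]
    exact (h i).trans (le_abs_self _)

/-- shift by `m`: `(sh m u) n = u (n-m)` for `n ≥ m`, else 0. -/
def sh (m : ℕ) (u : ℕ → ℝ) : ℕ → ℝ := fun n => if n < m then 0 else u (n - m)

lemma norm_toX_sh_le (p : ℝ≥0∞) (hp : 1 ≤ p) (N : ℕ) (hN : 0 < N) (m : ℕ)
    (u : ℕ → ℝ) (hu0 : ∀ n, 0 ≤ u n) :
    ‖toX p N (sh m u)‖ ≤ ‖toX p N u‖ := by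
  haveI := Fact.mk hp
  haveI : Nonempty (Fin N) := ⟨⟨0, hN⟩⟩
  rcases eq_or_ne p ⊤ with hT | hT
  · subst hT
    rw [PiLp.norm_eq_ciSup, PiLp.norm_eq_ciSup]
    apply ciSup_le; intro i
    by_cases hi : (i : ℕ) < m
    · rw [toX_apply, sh, if_pos hi, norm_zero]
      refine le_trans (norm_nonneg (toX ⊤ N u ⟨0, hN⟩)) ?_
      exact le_ciSup (f := fun i : Fin N => ‖toX ⊤ N u i‖) ((Set.finite_range _).bddAbove) _
    · have hlt : (i : ℕ) - m < N := lt_of_le_of_lt (Nat.sub_le _ _) i.isLt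
      have : ‖toX ⊤ N (sh m u) i‖ = ‖toX ⊤ N u ⟨(i : ℕ) - m, hlt⟩‖ := by
        rw [toX_apply, toX_apply, sh, if_neg hi]
      rw [this]
      exact le_ciSup (f := fun i : Fin N => ‖toX ⊤ N u i‖) ((Set.finite_range _).bddAbove) _
  · have ht0 : 0 < p.toReal := ENNReal.toReal_pos (by intro h'; rw [h'] at hp; simp at hp) hT
    rw [PiLp.norm_eq_sum ht0, PiLp.norm_eq_sum ht0]
    apply Real.rpow_le_rpow (by positivity) ?_ (by positivity)
    have lhs_eq : ∑ i : Fin N, ‖toX p N (sh m u) i‖ ^ p.toReal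
        = ∑ n ∈ Finset.range N, |sh m u n| ^ p.toReal := by
      rw [← Fin.sum_univ_eq_sum_range (fun n => |sh m u n| ^ p.toReal) N]
      exact Finset.sum_congr rfl fun i _ => by rw [toX_apply, Real.norm_eq_abs]
    have rhs_eq : ∑ i : Fin N, ‖toX p N u i‖ ^ p.toReal
        = ∑ n ∈ Finset.range N, |u n| ^ p.toReal := by
      rw [← Fin.sum_univ_eq_sum_range (fun n => |u n| ^ p.toReal) N]
      exact Finset.sum_congr rfl fun i _ => by rw [toX_apply, Real.norm_eq_abs]
    rw [lhs_eq, rhs_eq]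
    have h1 : ∑ n ∈ Finset.range N, |sh m u n| ^ p.toReal
        = ∑ n ∈ Finset.Ico m N, |sh m u n| ^ p.toReal := by
      refine (Finset.sum_subset ?_ ?_).symm
      · intro n hn; exact Finset.mem_range.mpr (Finset.mem_Ico.mp hn).2
      · intro n _ hn
        have : n < m := by
          by_contra hcon
          exact hn (Finset.mem_Ico.mpr ⟨le_of_not_gt hcon, Finset.mem_range.mp ‹_›⟩)
        rw [sh, if_pos this, abs_zero, Real.zero_rpow (ne_of_gt ht0)]
    rw [h1, Finset.sum_Ico_eq_sum_range]
    have h2 : ∀ l, |sh m u (m + l)| ^ p.toReal = |u l| ^ p.toReal := by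
      intro l
      rw [sh, if_neg (by omega), Nat.add_sub_cancel_left]
    calc ∑ l ∈ Finset.range (N - m), |sh m u (m + l)| ^ p.toReal
        = ∑ l ∈ Finset.range (N - m), |u l| ^ p.toReal :=
          Finset.sum_congr rfl fun l _ => h2 l
      _ ≤ ∑ l ∈ Finset.range N, |u l| ^ p.toReal :=
          Finset.sum_le_sum_of_subset_of_nonneg
            (Finset.range_subset_range.mpr (Nat.sub_le _ _))
            (fun i _ _ => by positivity)

lemma norm_toX_bk_le (p : ℝ≥0∞) (hp : 1 ≤ p) (N : ℕ) (hN : 0 < N)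
    (u : ℕ → ℝ) (hu0 : ∀ n, 0 ≤ u n) (huN : ∀ n, N ≤ n → u n = 0) :
    ‖toX p N (fun n => u (n + 1))‖ ≤ ‖toX p N u‖ := by
  haveI := Fact.mk hp
  haveI : Nonempty (Fin N) := ⟨⟨0, hN⟩⟩
  rcases eq_or_ne p ⊤ with hT | hT
  · subst hT
    rw [PiLp.norm_eq_ciSup, PiLp.norm_eq_ciSup]
    apply ciSup_le; intro i
    by_cases hi : (i : ℕ) + 1 < N
    · have : ‖toX ⊤ N (fun n => u (n+1)) i‖ = ‖toX ⊤ N u ⟨(i : ℕ) + 1, hi⟩‖ := rfl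
      rw [this]
      exact le_ciSup (f := fun i : Fin N => ‖toX ⊤ N u i‖) ((Set.finite_range _).bddAbove) _
    · have : u ((i : ℕ) + 1) = 0 := huN _ (le_of_not_gt hi)
      rw [toX_apply, this, norm_zero]
      refine le_trans (norm_nonneg (toX ⊤ N u ⟨0, hN⟩)) ?_
      exact le_ciSup (f := fun i : Fin N => ‖toX ⊤ N u i‖) ((Set.finite_range _).bddAbove) _
  · have ht0 : 0 < p.toReal := ENNReal.toReal_pos (by intro h'; rw [h'] at hp; simp at hp) hT
    rw [PiLp.norm_eq_sum ht0, PiLp.norm_eq_sum ht0]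
    apply Real.rpow_le_rpow (by positivity) ?_ (by positivity)
    have lhs_eq : ∑ i : Fin N, ‖toX p N (fun n => u (n+1)) i‖ ^ p.toReal
        = ∑ n ∈ Finset.range N, |u (n+1)| ^ p.toReal := by
      rw [← Fin.sum_univ_eq_sum_range (fun n => |u (n+1)| ^ p.toReal) N]
      exact Finset.sum_congr rfl fun i _ => by rw [toX_apply, Real.norm_eq_abs]
    have rhs_eq : ∑ i : Fin N, ‖toX p N u i‖ ^ p.toReal
        = ∑ n ∈ Finset.range N, |u n| ^ p.toReal := by
      rw [← Fin.sum_univ_eq_sum_range (fun n => |u n| ^ p.toReal) N]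
      exact Finset.sum_congr rfl fun i _ => by rw [toX_apply, Real.norm_eq_abs]
    rw [lhs_eq, rhs_eq]
    have : ∑ n ∈ Finset.range N, |u (n+1)| ^ p.toReal
        = ∑ n ∈ Finset.Ico 1 (N+1), |u n| ^ p.toReal := by
      rw [Finset.sum_Ico_eq_sum_range]
      simp [Nat.add_comm 1, Nat.add_sub_cancel]
    rw [this]
    calc ∑ n ∈ Finset.Ico 1 (N+1), |u n| ^ p.toReal
        ≤ ∑ n ∈ Finset.range (N+1), |u n| ^ p.toReal :=
          Finset.sum_le_sum_of_subset_of_nonneg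
            (by intro n hn; exact Finset.mem_range.mpr (Finset.mem_Ico.mp hn).2)
            (fun i _ _ => by positivity)
      _ = ∑ n ∈ Finset.range N, |u n| ^ p.toReal := by
          rw [Finset.sum_range_succ, huN N le_rfl, abs_zero,
            Real.zero_rpow (ne_of_gt ht0), add_zero]

lemma lpVec_conv (p : ℝ≥0∞) (hp : 1 ≤ p) (N : ℕ) (hN : 0 < N) (r : ℝ)
    (hr0 : 0 ≤ r) (hr1 : r < 1) (w u : ℕ → ℝ)
    (hw0 : ∀ n, 0 ≤ w n) (hu0 : ∀ n, 0 ≤ u n)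
    (hwN : ∀ n, N ≤ n → w n = 0) (huN : ∀ n, N ≤ n → u n = 0)
    (hconv : ∀ n, w n ≤ (∑ m ∈ Finset.range (n+1), r ^ (n - m) * u m) + u (n + 1)) :
    lpVec p w ≤ ((1 - r)⁻¹ + 1) * lpVec p u := by
  haveI := Fact.mk hp
  set dom : ℕ → ℝ := fun n => (∑ m ∈ Finset.range N, r ^ m * sh m u n) + u (n + 1) with hdom
  have hshnn : ∀ m n, 0 ≤ sh m u n := by
    intro m n; rw [sh]; split
    · exact le_refl 0
    · exact hu0 _
  have hdom_ge : ∀ i : Fin N, |w i| ≤ dom i := by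
    intro i
    rw [abs_of_nonneg (hw0 i)]
    refine (hconv i).trans ?_
    apply add_le_add_left
    have hre : ∑ m ∈ Finset.range ((i : ℕ) + 1), r ^ ((i : ℕ) - m) * u m
        = ∑ m ∈ Finset.range ((i : ℕ) + 1), r ^ m * sh m u i := by
      rw [← Finset.sum_range_reflect (fun m => r ^ m * sh m u i) ((i : ℕ) + 1)]
      apply Finset.sum_congr rfl
      intro m hm
      have hmi : m ≤ (i : ℕ) := Nat.lt_succ_iff.mp (Finset.mem_range.mp hm)
      have e1 : (i : ℕ) + 1 - 1 - m = (i : ℕ) - m := by omega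
      rw [e1, sh, if_neg (by omega)]
      congr 2
      omega
    rw [hre]
    apply Finset.sum_le_sum_of_subset_of_nonneg
    · exact Finset.range_subset_range.mpr i.isLt
    · intro m _ _; exact mul_nonneg (pow_nonneg hr0 _) (hshnn _ _)
  have key : ‖toX p N w‖ ≤ ‖toX p N dom‖ :=
    norm_toX_mono p hp N hN (fun i => by rw [toX_apply, toX_apply]; exact hdom_ge i)
  have hdecomp : toX p N dom
      = (∑ m ∈ Finset.range N, r ^ m • toX p N (sh m u)) + toX p N (fun n => u (n + 1)) := by
    ext i
    rw [PiLp.add_apply, Xsum_apply]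
    simp only [PiLp.smul_apply, smul_eq_mul]
    rfl
  have hnorm2 : ‖toX p N dom‖ ≤ (∑ m ∈ Finset.range N, r ^ m) * ‖toX p N u‖ + ‖toX p N u‖ := by
    rw [hdecomp]
    refine (norm_add_le _ _).trans (add_le_add ?_ (norm_toX_bk_le p hp N hN u hu0 huN))
    refine (norm_sum_le _ _).trans ?_
    rw [Finset.sum_mul]
    apply Finset.sum_le_sum
    intro m _
    rw [norm_smul, Real.norm_eq_abs, abs_of_nonneg (by positivity)]
    exact mul_le_mul_of_nonneg_left (norm_toX_sh_le p hp N hN m u hu0) (by positivity)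
  have hnn : 0 ≤ ‖toX p N u‖ := norm_nonneg _
  have hgeom := geom_bound r hr0 hr1 N
  rw [lpVec_eq_norm p hp N hN w hw0 hwN, lpVec_eq_norm p hp N hN u hu0 huN]
  calc ‖toX p N w‖ ≤ (∑ m ∈ Finset.range N, r ^ m) * ‖toX p N u‖ + ‖toX p N u‖ :=
        key.trans hnorm2
    _ ≤ (1 - r)⁻¹ * ‖toX p N u‖ + ‖toX p N u‖ := by
        apply add_le_add_left (mul_le_mul_of_nonneg_right hgeom hnn)
    _ = ((1 - r)⁻¹ + 1) * ‖toX p N u‖ := by ring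

lemma lpVec_decomp (p : ℝ≥0∞) (hp : 1 ≤ p) (N : ℕ) (hN : 0 < N)
    (V : ℕ → ℝ) (hV0 : ∀ n, 0 ≤ V n) (hVN : ∀ n, N ≤ n → V n = 0)
    (a0 : ℝ) (ha0 : 0 ≤ a0) (c : ℝ) (hc : 0 ≤ c) :
    lpVec p (fun m => c * (V m + if m = 0 then a0 else 0)) ≤ c * (lpVec p V + a0) := by
  haveI := Fact.mk hp
  haveI : Nonempty (Fin N) := ⟨⟨0, hN⟩⟩
  have hu0 : ∀ n, 0 ≤ c * (V n + if n = 0 then a0 else 0) := by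
    intro n; have := hV0 n; positivity
  have huN : ∀ n, N ≤ n → c * (V n + if n = 0 then a0 else 0) = 0 := by
    intro n hn
    rw [hVN n hn, if_neg (by omega), add_zero, mul_zero]
  rw [lpVec_eq_norm p hp N hN _ hu0 huN, lpVec_eq_norm p hp N hN V hV0 hVN]
  have hdec : toX p N (fun m => c * (V m + if m = 0 then a0 else 0))
      = c • (toX p N V + toX p N (fun m => if m = 0 then a0 else 0)) := by
    ext i
    simp only [PiLp.smul_apply, PiLp.add_apply, smul_eq_mul]
    rfl
  rw [hdec, norm_smul, Real.norm_eq_abs, abs_of_nonneg hc]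
  apply mul_le_mul_of_nonneg_left ?_ hc
  refine (norm_add_le _ _).trans (add_le_add_right ?_ _)
  -- ‖toX p N (δ0 * a0)‖ ≤ a0
  rcases eq_or_ne p ⊤ with hT | hT
  · subst hT
    rw [PiLp.norm_eq_ciSup]
    apply ciSup_le; intro i
    rw [toX_apply, Real.norm_eq_abs]
    split
    · rw [abs_of_nonneg ha0]
    · simpa using ha0
  · have ht0 : 0 < p.toReal := ENNReal.toReal_pos (by intro h'; rw [h'] at hp; simp at hp) hT
    rw [PiLp.norm_eq_sum ht0]
    have : ∑ i : Fin N, ‖toX p N (fun m => if m = 0 then a0 else 0) i‖ ^ p.toReal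
        = ∑ n ∈ Finset.range N, |(if n = 0 then a0 else 0)| ^ p.toReal := by
      rw [← Fin.sum_univ_eq_sum_range (fun n => |(if n = 0 then a0 else 0)| ^ p.toReal) N]
      exact Finset.sum_congr rfl fun i _ => by rw [toX_apply, Real.norm_eq_abs]
    rw [this]
    have hsum : ∑ n ∈ Finset.range N, |(if n = 0 then a0 else 0)| ^ p.toReal = a0 ^ p.toReal := by
      rw [Finset.sum_eq_single 0]
      · rw [if_pos rfl, abs_of_nonneg ha0]
      · intro b _ hb; rw [if_neg hb, abs_zero, Real.zero_rpow (ne_of_gt ht0)]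
      · intro h; exact absurd (Finset.mem_range.mpr hN) h
    rw [hsum, ← Real.rpow_mul ha0, mul_one_div_cancel (ne_of_gt ht0), Real.rpow_one]



instance : IsFiniteMeasure sphMeas := by unfold sphMeas; infer_instance

/-! ### Generic integration helpers -/

lemma sph_integrable (f : Sph2 → ℝ) (hf : Continuous f) : Integrable f sphMeas :=
  hf.integrable_of_hasCompactSupport
    (IsCompact.of_isClosed_subset isCompact_univ (isClosed_tsupport f) (Set.subset_univ _))

/-- Cauchy–Schwarz for a finite measure. -/
lemma integral_abs_le_sqrt {α : Type*} [MeasurableSpace α] (μ : Measure α) [IsFiniteMeasure μ]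
    (h : α → ℝ) (h1 : Integrable h μ) (h2 : Integrable (fun a => h a ^ 2) μ) :
    (∫ a, |h a| ∂μ) ≤ Real.sqrt (μ Set.univ).toReal * Real.sqrt (∫ a, h a ^ 2 ∂μ) := by
  set V := (μ Set.univ).toReal with hVdef
  set I := ∫ a, |h a| ∂μ with hIdef
  set J := ∫ a, h a ^ 2 ∂μ with hJdef
  have hV : 0 ≤ V := ENNReal.toReal_nonneg
  have hJ : 0 ≤ J := integral_nonneg fun a => sq_nonneg _
  have hI : 0 ≤ I := integral_nonneg fun a => abs_nonneg _
  rcases eq_or_lt_of_le hV with hV0 | hVpos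
  · -- μ = 0
    have : μ Set.univ = 0 := by
      have := (ENNReal.toReal_eq_zero_iff _).mp hV0.symm
      rcases this with h0 | htop
      · exact h0
      · exact absurd htop (measure_ne_top μ _)
    have hμ0 : μ = 0 := Measure.measure_univ_eq_zero.mp this
    have : I = 0 := by rw [hIdef, hμ0, integral_zero_measure]
    rw [this]
    positivity
  · have expand : ∫ a, (V * |h a| - I) ^ 2 ∂μ = V ^ 2 * J - 2 * V * I * I + I ^ 2 * V := by
      have e1 : (fun a => (V * |h a| - I) ^ 2)
          = fun a => V ^ 2 * h a ^ 2 - 2 * V * I * |h a| + I ^ 2 := by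
        funext a
        have : |h a| ^ 2 = h a ^ 2 := sq_abs _
        nlinarith [this]
      rw [e1]
      have h2' : Integrable (fun a => V ^ 2 * h a ^ 2) μ := h2.const_mul _
      have h1' : Integrable (fun a => 2 * V * I * |h a|) μ := (h1.abs).const_mul _
      rw [integral_add (f := fun a => V ^ 2 * h a ^ 2 - 2 * V * I * |h a|)
          (g := fun _ => I ^ 2) (h2'.sub h1') (integrable_const _),
        integral_sub h2' h1', integral_const_mul, integral_const_mul, integral_const]
      simp only [smul_eq_mul]
      rw [← hIdef, ← hJdef, measureReal_def, ← hVdef]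
      ring
    have hnn : 0 ≤ ∫ a, (V * |h a| - I) ^ 2 ∂μ := integral_nonneg fun a => sq_nonneg _
    have key : I ^ 2 ≤ V * J := by
      have h3 : 0 ≤ V ^ 2 * J - V * I ^ 2 := by nlinarith [expand, hnn]
      nlinarith [hVpos]
    have := Real.sqrt_le_sqrt key
    calc I = Real.sqrt (I ^ 2) := by rw [Real.sqrt_sq hI]
      _ ≤ Real.sqrt (V * J) := this
      _ = Real.sqrt V * Real.sqrt J := Real.sqrt_mul hV _

/-- Cauchy–Schwarz on a set of finite volume. -/
lemma setIntegral_abs_le_sqrt (A : Set ℝ) (hA : volume A < ⊤) (h : ℝ → ℝ)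
    (h1 : IntegrableOn h A) (h2 : IntegrableOn (fun a => h a ^ 2) A) :
    (∫ a in A, |h a|) ≤ Real.sqrt (volume A).toReal * Real.sqrt (∫ a in A, h a ^ 2) := by
  haveI : IsFiniteMeasure (volume.restrict A) :=
    ⟨by rw [Measure.restrict_apply_univ]; exact hA⟩
  have := integral_abs_le_sqrt (volume.restrict A) h h1 h2
  rwa [Measure.restrict_apply_univ] at this

lemma setIntegral_union_le (f : ℝ → ℝ) (hf : ∀ x, 0 ≤ f x) (s t : Set ℝ)
    (hs : MeasurableSet s) (ht : MeasurableSet t) (hint : IntegrableOn f (s ∪ t)) :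
    ∫ x in s ∪ t, f x ≤ (∫ x in s, f x) + ∫ x in t, f x := by
  rw [← Set.union_diff_self, setIntegral_union Set.disjoint_sdiff_right (ht.diff hs)
    (hint.mono_set Set.subset_union_left)
    (hint.mono_set ((Set.diff_subset).trans Set.subset_union_right))]
  apply add_le_add_right
  apply setIntegral_mono_set (hint.mono_set Set.subset_union_right)
    (Filter.Eventually.of_forall fun x => hf x) (HasSubset.Subset.eventuallyLE Set.diff_subset)

/-- products with the sphere measure -/
lemma prodInt (F : ℝ → Sph2 → ℝ) (hF : Continuous fun q : ℝ × Sph2 => F q.1 q.2)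
    (A : Set ℝ) (hA : MeasurableSet A) (B : ℝ) (hAB : A ⊆ Set.Icc (-B) B) :
    Integrable (Function.uncurry F) ((volume.restrict A).prod sphMeas) := by
  haveI : IsFiniteMeasure (volume.restrict A) :=
    ⟨by rw [Measure.restrict_apply_univ]; exact lt_of_le_of_lt (measure_mono hAB) measure_Icc_lt_top⟩
  obtain ⟨C, hC⟩ := (isCompact_Icc (a := -B) (b := B)).prod (isCompact_univ (X := Sph2))
    |>.exists_bound_of_continuousOn hF.continuousOn
  apply Integrable.mono' (integrable_const C) hF.aestronglyMeasurable
  have hres : (volume.restrict A).prod sphMeas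
      = ((volume : Measure ℝ).prod sphMeas).restrict (A ×ˢ Set.univ) := by
    rw [← Measure.prod_restrict, Measure.restrict_univ]
  rw [hres]
  filter_upwards [ae_restrict_mem (hA.prod MeasurableSet.univ)] with q hq
  exact hC q ⟨hAB hq.1, trivial⟩

lemma swapInt (F : ℝ → Sph2 → ℝ) (hF : Continuous fun q : ℝ × Sph2 => F q.1 q.2)
    (A : Set ℝ) (hA : MeasurableSet A) (B : ℝ) (hAB : A ⊆ Set.Icc (-B) B) :
    ∫ x in A, (∫ ω, F x ω ∂sphMeas) = ∫ ω, (∫ x in A, F x ω) ∂sphMeas :=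
  integral_integral_swap (prodInt F hF A hA B hAB)

lemma intOn_inner (F : ℝ → Sph2 → ℝ) (hF : Continuous fun q : ℝ × Sph2 => F q.1 q.2)
    (A : Set ℝ) (hA : MeasurableSet A) (B : ℝ) (hAB : A ⊆ Set.Icc (-B) B) :
    IntegrableOn (fun x => ∫ ω, F x ω ∂sphMeas) A volume :=
  (prodInt F hF A hA B hAB).integral_prod_left

lemma int_sph_fn (F : ℝ → Sph2 → ℝ) (hF : Continuous fun q : ℝ × Sph2 => F q.1 q.2)
    (A : Set ℝ) (hA : MeasurableSet A) (B : ℝ) (hAB : A ⊆ Set.Icc (-B) B) :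
    Integrable (fun ω => ∫ x in A, F x ω) sphMeas :=
  (prodInt F hF A hA B hAB).integral_prod_right

lemma int_omega_slice (F : ℝ → Sph2 → ℝ) (hF : Continuous fun q : ℝ × Sph2 => F q.1 q.2)
    (x : ℝ) : Integrable (fun ω => F x ω) sphMeas := by
  apply sph_integrable
  exact hF.comp (continuous_const.prodMk continuous_id)

lemma dbl_mono (F G : ℝ → Sph2 → ℝ) (hF : Continuous fun q : ℝ × Sph2 => F q.1 q.2)
    (hG : Continuous fun q : ℝ × Sph2 => G q.1 q.2)
    (A : Set ℝ) (hA : MeasurableSet A) (B : ℝ) (hAB : A ⊆ Set.Icc (-B) B)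
    (hle : ∀ x ∈ A, ∀ ω, F x ω ≤ G x ω) :
    ∫ x in A, (∫ ω, F x ω ∂sphMeas) ≤ ∫ x in A, (∫ ω, G x ω ∂sphMeas) := by
  apply setIntegral_mono_on (intOn_inner F hF A hA B hAB) (intOn_inner G hG A hA B hAB) hA
  intro x hx
  exact integral_mono (int_omega_slice F hF x) (int_omega_slice G hG x) (hle x hx)

/-! ### set facts -/

lemma ball_eq : {x : ℝ | |x| < 1} = Set.Ioo (-1 : ℝ) 1 := by
  ext x; simp [abs_lt]

lemma ball_meas : MeasurableSet {x : ℝ | |x| < 1} := by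
  rw [ball_eq]; exact measurableSet_Ioo

lemma ball_vol : (volume {x : ℝ | |x| < 1}).toReal = 2 := by
  rw [ball_eq, Real.volume_Ioo]
  norm_num

lemma ball_subset (B : ℝ) (hB : 1 ≤ B) : {x : ℝ | |x| < 1} ⊆ Set.Icc (-B) B := by
  intro x hx
  have : |x| < 1 := hx
  constructor <;> [nlinarith [abs_le.mp this.le]; nlinarith [(abs_le.mp this.le).2]]

lemma annAbs_eq (i : ℕ) : annAbs i
    = Set.Icc (-(2 : ℝ) ^ (i + 1)) (-(2 : ℝ) ^ i) ∪ Set.Icc ((2 : ℝ) ^ i) ((2 : ℝ) ^ (i + 1)) := by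
  ext x
  have h2i : (0 : ℝ) < 2 ^ i := by positivity
  have hps : (2 : ℝ) ^ (i + 1) = 2 ^ i * 2 := pow_succ 2 i
  rcases le_or_gt 0 x with hx | hx
  · simp only [annAbs, Set.mem_setOf_eq, abs_of_nonneg hx, Set.mem_union, Set.mem_Icc]
    constructor
    · rintro ⟨h1, h2⟩; right; exact ⟨h1, h2⟩
    · rintro (⟨h1, h2⟩ | ⟨h1, h2⟩)
      · constructor <;> nlinarith
      · exact ⟨h1, h2⟩
  · simp only [annAbs, Set.mem_setOf_eq, abs_of_neg hx, Set.mem_union, Set.mem_Icc]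
    constructor
    · rintro ⟨h1, h2⟩; left; constructor <;> linarith
    · rintro (⟨h1, h2⟩ | ⟨h1, h2⟩)
      · constructor <;> linarith
      · constructor <;> nlinarith

lemma annAbs_meas (i : ℕ) : MeasurableSet (annAbs i) := by
  rw [annAbs_eq]; exact measurableSet_Icc.union measurableSet_Icc

lemma annAbs_vol (i : ℕ) : (volume (annAbs i)).toReal = 2 ^ (i + 1) := by
  rw [annAbs_eq]
  have h2i : (0 : ℝ) < 2 ^ i := by positivity
  have hps : (2 : ℝ) ^ (i + 1) = 2 ^ i * 2 := pow_succ 2 i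
  rw [measure_union ?disj measurableSet_Icc]
  case disj =>
    rw [Set.disjoint_left]
    rintro x ⟨_, hx2⟩ ⟨hx3, _⟩
    nlinarith
  rw [Real.volume_Icc, Real.volume_Icc, ← ENNReal.ofReal_add (by nlinarith) (by nlinarith),
    ENNReal.toReal_ofReal (by nlinarith)]
  nlinarith

lemma annAbs_subset (i : ℕ) : annAbs i ⊆ Set.Icc (-(2 : ℝ) ^ (i + 1)) ((2 : ℝ) ^ (i + 1)) := by
  intro x hx
  exact abs_le.mp hx.2

lemma Icc12_subset : Set.Icc (1 : ℝ) 2 ⊆ annAbs 0 := by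
  intro x hx
  have hx1 := hx.1
  have hx2 := hx.2
  constructor <;> rw [abs_of_nonneg (by linarith)] <;> norm_num <;> linarith

lemma annAbs_vol_lt_top (i : ℕ) : volume (annAbs i) < ⊤ :=
  lt_of_le_of_lt (measure_mono (annAbs_subset i)) measure_Icc_lt_top

lemma ball_vol_lt_top : volume {x : ℝ | |x| < 1} < ⊤ :=
  lt_of_le_of_lt (measure_mono (ball_subset 1 le_rfl)) measure_Icc_lt_top


lemma hRmul (a b : ℝ) : (2:ℝ)^a * (2:ℝ)^b = (2:ℝ)^(a+b) := (Real.rpow_add two_pos a b).symm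

lemma hRpow (a : ℝ) (n : ℕ) : ((2:ℝ)^a)^n = (2:ℝ)^(a*n) := by
  rw [← Real.rpow_natCast ((2:ℝ)^a) n, ← Real.rpow_mul (le_of_lt two_pos)]

lemma hR2 (n : ℕ) : (2:ℝ)^n = (2:ℝ)^(n:ℝ) := (Real.rpow_natCast 2 n).symm

lemma hRpos (a : ℝ) : (0:ℝ) < (2:ℝ)^a := Real.rpow_pos_of_pos two_pos a

lemma hRone (a : ℝ) (ha : 0 ≤ a) : (1:ℝ) ≤ (2:ℝ)^a := by
  calc (1:ℝ) = (2:ℝ)^(0:ℝ) := (Real.rpow_zero 2).symm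
    _ ≤ (2:ℝ)^a := Real.rpow_le_rpow_of_exponent_le one_le_two ha

lemma two_mul_rpow (e : ℝ) : 2 * (2:ℝ)^e = (2:ℝ)^(1+e) := by
  rw [Real.rpow_add two_pos, Real.rpow_one]

lemma hRsq (a : ℝ) : ((2:ℝ)^a)^2 = (2:ℝ)^(a*2) := by
  rw [pow_two, hRmul]; congr 1; ring

lemma rpow_two' : (2:ℝ)^(2:ℝ) = 4 := by
  rw [show (2:ℝ) = ((2:ℕ):ℝ) from by norm_num, Real.rpow_natCast]
  norm_num

lemma geo_rpow (ε : ℝ) (hε : 0 < ε) (k : ℕ) :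
    ∑ i ∈ Finset.range (k+1), (2:ℝ)^(ε*i) ≤ (1 - (2:ℝ)^(-ε))⁻¹ * (2:ℝ)^(ε*k) := by
  have hlt1 : (2:ℝ)^(-ε) < 1 := Real.rpow_lt_one_of_one_lt_of_neg one_lt_two (by linarith)
  have h0 : (0:ℝ) ≤ (2:ℝ)^(-ε) := (hRpos _).le
  have hrefl : ∑ i ∈ Finset.range (k+1), (2:ℝ)^(ε*i)
      = ∑ j ∈ Finset.range (k+1), (2:ℝ)^(ε*((k - j : ℕ):ℝ)) := by
    rw [← Finset.sum_range_reflect (fun i => (2:ℝ)^(ε*(i:ℝ))) (k+1)]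
    apply Finset.sum_congr rfl
    intro j hj
    have hkj : k + 1 - 1 - j = k - j := by omega
    rw [hkj]
  rw [hrefl]
  have hterm : ∀ j ∈ Finset.range (k+1),
      (2:ℝ)^(ε*((k - j : ℕ):ℝ)) = (2:ℝ)^(ε*k) * ((2:ℝ)^(-ε))^j := by
    intro j hj
    have hjk : j ≤ k := Nat.lt_succ_iff.mp (Finset.mem_range.mp hj)
    rw [hRpow, hRmul]
    congr 1
    rw [Nat.cast_sub hjk]
    ring
  rw [Finset.sum_congr rfl hterm, ← Finset.mul_sum]
  rw [mul_comm ((2:ℝ)^(ε*(k:ℝ)))]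
  exact mul_le_mul_of_nonneg_right (geom_bound _ h0 hlt1 _) (hRpos _).le

lemma weighted_sq (ε cε : ℝ) (hε : 0 < ε) (hcε : cε = (1 - (2:ℝ)^(-ε))⁻¹) (k : ℕ)
    (a b : ℝ) (u : ℕ → ℝ) (ha : 0 ≤ a) (hb : 0 ≤ b) (hu : ∀ i, 0 ≤ u i) (v : ℝ)
    (hv : |v| ≤ Real.sqrt a + Real.sqrt 2 * Real.sqrt b
      + ∑ i ∈ Finset.range (k+1), Real.sqrt ((2:ℝ)^(i+1)) * Real.sqrt (u i)) :
    v^2 ≤ (2:ℝ)^(ε*k) * (3*a + 6*b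
      + 3*cε * ∑ i ∈ Finset.range (k+1), (2:ℝ)^(-(ε*i)) * (2:ℝ)^(i+1) * u i) := by
  set S := ∑ i ∈ Finset.range (k+1), Real.sqrt ((2:ℝ)^(i+1)) * Real.sqrt (u i) with hSdef
  have hS0 : 0 ≤ S := Finset.sum_nonneg fun i _ => mul_nonneg (Real.sqrt_nonneg _) (Real.sqrt_nonneg _)
  have hQ0 : 0 ≤ ∑ i ∈ Finset.range (k+1), (2:ℝ)^(-(ε*i)) * (2:ℝ)^(i+1) * u i :=
    Finset.sum_nonneg fun i _ => mul_nonneg (mul_nonneg (hRpos _).le (by positivity)) (hu i)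
  have hsq : v^2 ≤ 3*a + 6*b + 3*S^2 := by
    have h1 : |v|^2 ≤ (Real.sqrt a + Real.sqrt 2 * Real.sqrt b + S)^2 :=
      pow_le_pow_left₀ (abs_nonneg v) hv 2
    have ha' : Real.sqrt a ^ 2 = a := Real.sq_sqrt ha
    have hb' : (Real.sqrt 2 * Real.sqrt b)^2 = 2*b := by
      rw [mul_pow, Real.sq_sqrt (by norm_num : (0:ℝ) ≤ 2), Real.sq_sqrt hb]
    have habs : |v|^2 = v^2 := sq_abs v
    nlinarith [Real.sqrt_nonneg a, mul_nonneg (Real.sqrt_nonneg 2) (Real.sqrt_nonneg b), hS0,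
      sq_nonneg (Real.sqrt a - Real.sqrt 2 * Real.sqrt b),
      sq_nonneg (Real.sqrt a - S), sq_nonneg (Real.sqrt 2 * Real.sqrt b - S)]
  have hCS : S^2 ≤ (∑ i ∈ Finset.range (k+1), (2:ℝ)^(ε*i))
      * (∑ i ∈ Finset.range (k+1), (2:ℝ)^(-(ε*i)) * (2:ℝ)^(i+1) * u i) := by
    have hmain := Finset.sum_mul_sq_le_sq_mul_sq (Finset.range (k+1))
      (fun i => Real.sqrt ((2:ℝ)^(ε*i)))
      (fun i => Real.sqrt ((2:ℝ)^(-(ε*i)) * (2:ℝ)^(i+1) * u i))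
    have hfg : ∀ i ∈ Finset.range (k+1), Real.sqrt ((2:ℝ)^(ε*i))
        * Real.sqrt ((2:ℝ)^(-(ε*i)) * (2:ℝ)^(i+1) * u i)
        = Real.sqrt ((2:ℝ)^(i+1)) * Real.sqrt (u i) := by
      intro i _
      rw [← Real.sqrt_mul (hRpos _).le, ← Real.sqrt_mul (by positivity) (u i)]
      congr 1
      rw [← mul_assoc, ← mul_assoc, hRmul]
      norm_num
    have hf2 : ∀ i ∈ Finset.range (k+1), Real.sqrt ((2:ℝ)^(ε*i)) ^ 2 = (2:ℝ)^(ε*i) :=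
      fun i _ => Real.sq_sqrt (hRpos _).le
    have hg2 : ∀ i ∈ Finset.range (k+1),
        Real.sqrt ((2:ℝ)^(-(ε*i)) * (2:ℝ)^(i+1) * u i) ^ 2
          = (2:ℝ)^(-(ε*i)) * (2:ℝ)^(i+1) * u i :=
      fun i _ => Real.sq_sqrt (mul_nonneg (mul_nonneg (hRpos _).le (by positivity)) (hu i))
    rw [Finset.sum_congr rfl hfg, Finset.sum_congr rfl hf2, Finset.sum_congr rfl hg2] at hmain
    exact hmain
  have hgeo : ∑ i ∈ Finset.range (k+1), (2:ℝ)^(ε*i) ≤ cε * (2:ℝ)^(ε*k) := by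
    rw [hcε]; exact geo_rpow ε hε k
  have hcε0 : 0 < cε := by
    rw [hcε]
    have : (2:ℝ)^(-ε) < 1 := Real.rpow_lt_one_of_one_lt_of_neg one_lt_two (by linarith)
    exact inv_pos.mpr (by linarith)
  have hRk1 : (1:ℝ) ≤ (2:ℝ)^(ε*k) := hRone _ (by positivity)
  have hS2 : S^2 ≤ cε * (2:ℝ)^(ε*k) * (∑ i ∈ Finset.range (k+1), (2:ℝ)^(-(ε*i)) * (2:ℝ)^(i+1) * u i) :=
    hCS.trans (mul_le_mul_of_nonneg_right hgeo hQ0)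
  nlinarith [hS2, hsq, hRk1, ha, hb, hQ0, mul_nonneg hcε0.le hQ0]

/-- Sum of squares is at most square of sum, for nonnegative terms. -/
lemma sum_sq_le_sq_sum (n : ℕ) (f : ℕ → ℝ) (hf : ∀ i, 0 ≤ f i) :
    ∑ i ∈ Finset.range n, f i ^ 2 ≤ (∑ i ∈ Finset.range n, f i) ^ 2 := by
  rw [sq (∑ i ∈ Finset.range n, f i), Finset.sum_mul]
  apply Finset.sum_le_sum
  intro i hi
  rw [sq]
  apply mul_le_mul_of_nonneg_left ?_ (hf i)
  exact Finset.single_le_sum (fun j _ => hf j) hi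

set_option maxHeartbeats 2000000 in
/-- The final exponent bookkeeping. -/
lemma final_alg (s ε κ cε : ℝ) (hs : 1/2 < s) (hε : ε = s - 1/2)
    (hκ : κ = (2:ℝ)^(2*|s-1|)) (hcε : cε = (1 - (2:ℝ)^(-ε))⁻¹)
    (k : ℕ) (a0 Bm : ℝ) (Bi : ℕ → ℝ) (ha0 : 0 ≤ a0) (hBm : 0 ≤ Bm) (hBi : ∀ i, 0 ≤ Bi i) :
    (2:ℝ)^(k+1) * (((2:ℝ)^((k:ℝ)*(-s)))^2
        * ((2:ℝ)^(ε*k) * (3*a0^2 + 6*(κ*Bm)^2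
          + 3*cε * ∑ i ∈ Finset.range (k+1),
              (2:ℝ)^(-(ε*i)) * (2:ℝ)^(i+1) * (κ*(2:ℝ)^((s-1)*i)*Bi i)^2)))
      ≤ (12*(1 + κ^2 + cε*κ^2))
        * (((2:ℝ)^(-(ε/2)))^k * a0 + ((2:ℝ)^(-(ε/2)))^k * Bm
            + ∑ i ∈ Finset.range (k+1), ((2:ℝ)^(-(ε/2)))^(k-i) * Bi i)^2 := by
  have hε0 : 0 < ε := by rw [hε]; linarith
  have hκ1 : (1:ℝ) ≤ κ := by rw [hκ]; exact hRone _ (by positivity)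
  have hcε0 : 0 < cε := by
    rw [hcε]
    have : (2:ℝ)^(-ε) < 1 := Real.rpow_lt_one_of_one_lt_of_neg one_lt_two (by linarith)
    exact inv_pos.mpr (by linarith)
  set ρ : ℝ := (2:ℝ)^(-(ε/2)) with hρ
  set C4 : ℝ := 12*(1 + κ^2 + cε*κ^2) with hC4
  have hC4pos : 0 < C4 := by positivity
  have hrk : ∀ m : ℕ, ρ^m = (2:ℝ)^(-(ε/2)*(m:ℝ)) := fun m => hRpow _ m
  have hCeq : (2:ℝ)^(k+1) * (((2:ℝ)^((k:ℝ)*(-s)))^2 * (2:ℝ)^(ε*(k:ℝ))) = 2 * (ρ^k)^2 := by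
    rw [hR2 (k+1), hRsq ((k:ℝ)*(-s)), hrk k, hRsq (-(ε/2)*(k:ℝ)), hRmul, hRmul, two_mul_rpow]
    congr 1
    push_cast
    rw [hε]; ring
  set Q : ℝ := ∑ i ∈ Finset.range (k+1),
      (2:ℝ)^(-(ε*i)) * (2:ℝ)^(i+1) * (κ*(2:ℝ)^((s-1)*i)*Bi i)^2 with hQdef
  have hQ' : (2 * (ρ^k)^2) * Q = ∑ i ∈ Finset.range (k+1), 4*κ^2*((ρ^(k-i))^2 * Bi i^2) := by
    rw [hQdef, Finset.mul_sum]
    apply Finset.sum_congr rfl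
    intro i hi
    have hik : i ≤ k := Nat.lt_succ_iff.mp (Finset.mem_range.mp hi)
    have hterm : (2:ℝ)^(-(ε*i)) * (2:ℝ)^(i+1) * (κ*(2:ℝ)^((s-1)*i)*Bi i)^2
        = (2:ℝ)^(-(ε*i) + ((i:ℝ)+1) + (s-1)*i*2) * (κ^2 * Bi i^2) := by
      rw [mul_pow, mul_pow, hRsq ((s-1)*(i:ℝ)), hR2 (i+1)]
      rw [show ((2:ℝ)^(-(ε*(i:ℝ))) * (2:ℝ)^(((i+1:ℕ)):ℝ)) * (κ^2 * ((2:ℝ)^((s-1)*(i:ℝ)*2)) * Bi i^2)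
          = ((2:ℝ)^(-(ε*(i:ℝ))) * (2:ℝ)^(((i+1:ℕ)):ℝ) * (2:ℝ)^((s-1)*(i:ℝ)*2)) * (κ^2 * Bi i^2) from by ring]
      rw [hRmul, hRmul]
      congr 2
      push_cast
      ring
    rw [hterm, hrk k, hrk (k-i), hRsq (-(ε/2)*(k:ℝ)), hRsq (-(ε/2)*(((k-i:ℕ)):ℝ)),
      Nat.cast_sub hik]
    calc 2 * (2:ℝ)^(-(ε/2)*(k:ℝ)*2) * ((2:ℝ)^(-(ε*i) + ((i:ℝ)+1) + (s-1)*i*2) * (κ^2 * Bi i^2))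
        = 2 * ((2:ℝ)^(-(ε/2)*(k:ℝ)*2) * (2:ℝ)^(-(ε*i) + ((i:ℝ)+1) + (s-1)*i*2))
            * (κ^2 * Bi i^2) := by ring
      _ = (2:ℝ)^(1 + (-(ε/2)*(k:ℝ)*2 + (-(ε*i) + ((i:ℝ)+1) + (s-1)*i*2))) * (κ^2 * Bi i^2) := by
          rw [hRmul, two_mul_rpow]
      _ = (2:ℝ)^(2 + -(ε/2)*((k:ℝ)-(i:ℝ))*2) * (κ^2 * Bi i^2) := by
          congr 1
          rw [hε]; ring
      _ = 4 * (2:ℝ)^(-(ε/2)*((k:ℝ)-(i:ℝ))*2) * (κ^2 * Bi i^2) := by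
          rw [Real.rpow_add two_pos, rpow_two']
      _ = 4*κ^2*((2:ℝ)^(-(ε/2)*((k:ℝ)-(i:ℝ))*2) * Bi i^2) := by ring
  set Xa : ℝ := ρ^k * a0 with hXa
  set Xb : ℝ := ρ^k * Bm with hXb
  set Z : ℝ := ∑ i ∈ Finset.range (k+1), ρ^(k-i) * Bi i with hZ
  have hρ0 : (0:ℝ) ≤ ρ := (hRpos _).le
  have hXa0 : 0 ≤ Xa := mul_nonneg (pow_nonneg hρ0 _) ha0
  have hXb0 : 0 ≤ Xb := mul_nonneg (pow_nonneg hρ0 _) hBm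
  have hZ0 : 0 ≤ Z := Finset.sum_nonneg fun i _ => mul_nonneg (pow_nonneg hρ0 _) (hBi i)
  have hsumsq : ∑ i ∈ Finset.range (k+1), (ρ^(k-i) * Bi i)^2 ≤ Z^2 :=
    sum_sq_le_sq_sum (k+1) (fun i => ρ^(k-i) * Bi i)
      (fun i => mul_nonneg (pow_nonneg hρ0 _) (hBi i))
  have hLHS : (2:ℝ)^(k+1) * (((2:ℝ)^((k:ℝ)*(-s)))^2
        * ((2:ℝ)^(ε*k) * (3*a0^2 + 6*(κ*Bm)^2 + 3*cε * Q)))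
      = 6*Xa^2 + 12*κ^2*Xb^2 + 3*cε * ((2 * (ρ^k)^2) * Q) := by
    have e0 : (2:ℝ)^(k+1) * (((2:ℝ)^((k:ℝ)*(-s)))^2
          * ((2:ℝ)^(ε*k) * (3*a0^2 + 6*(κ*Bm)^2 + 3*cε * Q)))
        = ((2:ℝ)^(k+1) * (((2:ℝ)^((k:ℝ)*(-s)))^2 * (2:ℝ)^(ε*(k:ℝ))))
            * (3*a0^2 + 6*(κ*Bm)^2 + 3*cε * Q) := by ring
    rw [e0, hCeq, hXa, hXb]
    ring
  rw [hLHS, hQ']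
  have hQsum : 3*cε * ∑ i ∈ Finset.range (k+1), 4*κ^2*((ρ^(k-i))^2 * Bi i^2)
      ≤ 12*cε*κ^2 * Z^2 := by
    calc 3*cε * ∑ i ∈ Finset.range (k+1), 4*κ^2*((ρ^(k-i))^2 * Bi i^2)
        = 12*cε*κ^2 * ∑ i ∈ Finset.range (k+1), (ρ^(k-i)*Bi i)^2 := by
          rw [Finset.mul_sum, Finset.mul_sum]
          exact Finset.sum_congr rfl fun i _ => by ring
      _ ≤ 12*cε*κ^2 * Z^2 := by
          apply mul_le_mul_of_nonneg_left hsumsq (by positivity)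
  have h6 : (6:ℝ) ≤ C4 := by nlinarith [mul_nonneg hcε0.le (sq_nonneg κ), sq_nonneg κ]
  have h12κ : 12*κ^2 ≤ C4 := by nlinarith [mul_nonneg hcε0.le (sq_nonneg κ)]
  have h12cκ : 12*cε*κ^2 ≤ C4 := by nlinarith [sq_nonneg κ, mul_nonneg hcε0.le (sq_nonneg κ), hκ1]
  have hsq3 : Xa^2 + Xb^2 + Z^2 ≤ (Xa+Xb+Z)^2 := by
    nlinarith [mul_nonneg hXa0 hXb0, mul_nonneg hXa0 hZ0, mul_nonneg hXb0 hZ0]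
  calc 6*Xa^2 + 12*κ^2*Xb^2 + 3*cε * ∑ i ∈ Finset.range (k+1), 4*κ^2*((ρ^(k-i))^2 * Bi i^2)
      ≤ 6*Xa^2 + 12*κ^2*Xb^2 + 12*cε*κ^2*Z^2 := by linarith [hQsum]
    _ ≤ C4*Xa^2 + C4*Xb^2 + C4*Z^2 := by
        nlinarith [mul_nonneg (sub_nonneg.mpr h6) (sq_nonneg Xa),
          mul_nonneg (sub_nonneg.mpr h12κ) (sq_nonneg Xb),
          mul_nonneg (sub_nonneg.mpr h12cκ) (sq_nonneg Z)]
    _ = C4*(Xa^2+Xb^2+Z^2) := by ring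
    _ ≤ C4*(Xa+Xb+Z)^2 := mul_le_mul_of_nonneg_left hsq3 hC4pos.le

/-- The main analytic estimate. -/
lemma analytic_main (s : ℝ) (hs : 1/2 < s) (ψ : ℝ → Sph2 → ℝ)
    (Ψ : ℝ × EuclideanSpace ℝ (Fin 3) → ℝ) (hΨ : ContDiff ℝ (⊤ : ℕ∞) Ψ)
    (hψΨ : ∀ (x : ℝ) (ω : Sph2), ψ x ω = Ψ (x, ω)) (k : ℕ) (A : Set ℝ)
    (hA : A = annAbs k ∨ (A = {x : ℝ | |x| < 1} ∧ k = 0)) :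
    (L2nrm A (fun x ω => jap x ^ (-s) * ψ x ω))^2
      ≤ (12*(1 + ((2:ℝ)^(2*|s-1|))^2 + (1 - (2:ℝ)^(-(s-1/2)))⁻¹*((2:ℝ)^(2*|s-1|))^2))
        * (((2:ℝ)^(-((s-1/2)/2)))^k * L2nrm (annAbs 0) ψ
          + ((2:ℝ)^(-((s-1/2)/2)))^k
              * L2nrm {x : ℝ | |x| < 1} (fun x ω => jap x ^ (1-s) * pdx ψ x ω)
          + ∑ i ∈ Finset.range (k+1), ((2:ℝ)^(-((s-1/2)/2)))^(k-i)
              * L2nrm (annAbs i) (fun x ω => jap x ^ (1-s) * pdx ψ x ω))^2 := by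
  have hε0 : (0:ℝ) < s - 1/2 := by linarith
  set ε : ℝ := s - 1/2 with hεdef
  set κ : ℝ := (2:ℝ)^(2*|s-1|) with hκdef
  set cε : ℝ := (1 - (2:ℝ)^(-ε))⁻¹ with hcεdef
  -- continuity facts
  have contψ : Continuous fun q : ℝ × Sph2 => ψ q.1 q.2 := by
    have he : (fun q : ℝ × Sph2 => ψ q.1 q.2)
        = fun q : ℝ × Sph2 => Ψ (q.1, (q.2 : EuclideanSpace ℝ (Fin 3))) :=
      funext fun q => hψΨ q.1 q.2
    rw [he]
    exact hΨ.continuous.comp (continuous_fst.prodMk (continuous_subtype_val.comp continuous_snd))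
  have hkey : ∀ (x : ℝ) (ω : Sph2),
      HasDerivAt (fun y => ψ y ω) ((fderiv ℝ Ψ (x, (ω : EuclideanSpace ℝ (Fin 3)))) (1, 0)) x := by
    intro x ω
    have h1 : HasFDerivAt Ψ (fderiv ℝ Ψ (x, (ω : EuclideanSpace ℝ (Fin 3))))
        (x, (ω : EuclideanSpace ℝ (Fin 3))) :=
      (hΨ.differentiable (by simp) _).hasFDerivAt
    have h2 : HasDerivAt (fun y : ℝ => (y, (ω : EuclideanSpace ℝ (Fin 3))))
        ((1:ℝ), (0 : EuclideanSpace ℝ (Fin 3))) x :=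
      HasDerivAt.prodMk (hasDerivAt_id x) (hasDerivAt_const x _)
    have h3 := h1.comp_hasDerivAt x h2
    have he : (fun y => ψ y ω) = (Ψ ∘ fun y : ℝ => (y, (ω : EuclideanSpace ℝ (Fin 3)))) :=
      funext fun y => hψΨ y ω
    rw [he]
    exact h3
  have pdx_eq : ∀ x ω, pdx ψ x ω = (fderiv ℝ Ψ (x, (ω : EuclideanSpace ℝ (Fin 3)))) (1, 0) :=
    fun x ω => (hkey x ω).deriv
  have hderiv : ∀ (ω : Sph2) (x : ℝ), HasDerivAt (fun y => ψ y ω) (pdx ψ x ω) x := by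
    intro ω x; rw [pdx_eq]; exact hkey x ω
  have contP : Continuous fun q : ℝ × Sph2 => pdx ψ q.1 q.2 := by
    have he : (fun q : ℝ × Sph2 => pdx ψ q.1 q.2)
        = fun q : ℝ × Sph2 => (fderiv ℝ Ψ (q.1, (q.2 : EuclideanSpace ℝ (Fin 3)))) (1, 0) :=
      funext fun q => pdx_eq q.1 q.2
    rw [he]
    exact ((hΨ.continuous_fderiv (by simp)).comp
      (continuous_fst.prodMk (continuous_subtype_val.comp continuous_snd))).clm_apply
      continuous_const
  have contψ2 : Continuous fun q : ℝ × Sph2 => (ψ q.1 q.2)^2 := contψ.pow 2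
  have contP2 : Continuous fun q : ℝ × Sph2 => (pdx ψ q.1 q.2)^2 := contP.pow 2
  -- jap facts
  have jap_pos : ∀ x : ℝ, 0 < jap x := fun x => Real.sqrt_pos.mpr (by positivity)
  have jap_ge_abs : ∀ x : ℝ, |x| ≤ jap x := fun x => by
    rw [jap, ← Real.sqrt_sq_eq_abs]
    exact Real.sqrt_le_sqrt (by nlinarith)
  have jap_ge_one : ∀ x : ℝ, 1 ≤ jap x := fun x => by
    rw [jap]
    exact (Real.le_sqrt (by norm_num) (by positivity)).mpr (by nlinarith)
  have jap_le : ∀ x : ℝ, jap x ≤ 1 + |x| := fun x => by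
    rw [jap, show (1:ℝ) + |x| = Real.sqrt ((1+|x|)^2) from
      (Real.sqrt_sq (by positivity)).symm]
    exact Real.sqrt_le_sqrt (by nlinarith [sq_abs x, abs_nonneg x])
  have cont_jap : Continuous jap := by
    have : jap = fun x : ℝ => Real.sqrt (1 + x^2) := rfl
    rw [this]
    exact (continuous_const.add (continuous_pow 2)).sqrt
  have contjap_pow : ∀ t : ℝ, Continuous fun x : ℝ => jap x ^ t :=
    fun t => cont_jap.rpow_const (fun x => Or.inl (jap_pos x).ne')
  have contF2 : Continuous fun q : ℝ × Sph2 => (jap q.1 ^ (-s) * ψ q.1 q.2)^2 :=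
    (((contjap_pow (-s)).comp continuous_fst).mul contψ).pow 2
  have contG2 : Continuous fun q : ℝ × Sph2 => (jap q.1 ^ (1-s) * pdx ψ q.1 q.2)^2 :=
    (((contjap_pow (1-s)).comp continuous_fst).mul contP).pow 2
  -- shorthand
  set a0 : ℝ := L2nrm (annAbs 0) ψ with ha0def
  set bb : ℝ := L2nrm {x : ℝ | |x| < 1} (pdx ψ) with hbbdef
  set bi : ℕ → ℝ := fun i => L2nrm (annAbs i) (pdx ψ) with hbidef
  set Bm : ℝ := L2nrm {x : ℝ | |x| < 1} (fun x ω => jap x ^ (1-s) * pdx ψ x ω) with hBmdef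
  set BB : ℕ → ℝ := fun i => L2nrm (annAbs i) (fun x ω => jap x ^ (1-s) * pdx ψ x ω) with hBBdef
  have ha0nn : 0 ≤ a0 := Real.sqrt_nonneg _
  have hBmnn : 0 ≤ Bm := Real.sqrt_nonneg _
  have hBBnn : ∀ i, 0 ≤ BB i := fun i => Real.sqrt_nonneg _
  -- SLICE
  have slice : ∀ (m : ℕ) (x : ℝ), |x| ≤ 2^(m+1) → ∀ ω : Sph2,
      |ψ x ω| ≤ Real.sqrt (∫ y in Set.Icc (1:ℝ) 2, (ψ y ω)^2)
        + Real.sqrt 2 * Real.sqrt (∫ t in {x : ℝ | |x| < 1}, (pdx ψ t ω)^2)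
        + ∑ i ∈ Finset.range (m+1),
            Real.sqrt ((2:ℝ)^(i+1)) * Real.sqrt (∫ t in annAbs i, (pdx ψ t ω)^2) := by
    intro m x hx ω
    have contPt : Continuous fun t => pdx ψ t ω :=
      contP.comp (continuous_id.prodMk continuous_const)
    have contψt : Continuous fun y => ψ y ω :=
      contψ.comp (continuous_id.prodMk continuous_const)
    have hB2 : (2:ℝ) ≤ 2^(m+1) := by
      calc (2:ℝ) = 2^1 := (pow_one 2).symm
        _ ≤ 2^(m+1) := pow_le_pow_right₀ one_le_two (by omega)
    have hintIcc : IntegrableOn (fun t => |pdx ψ t ω|) (Set.Icc (-(2:ℝ)^(m+1)) (2^(m+1))) :=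
      contPt.abs.integrableOn_Icc
    have hD : ∀ y ∈ Set.Icc (1:ℝ) 2,
        |ψ x ω| ≤ |ψ y ω| + ∫ t in Set.Icc (-(2:ℝ)^(m+1)) (2^(m+1)), |pdx ψ t ω| := by
      intro y hy
      have hftc : ∫ t in y..x, pdx ψ t ω = ψ x ω - ψ y ω :=
        intervalIntegral.integral_eq_sub_of_hasDerivAt (fun t _ => hderiv ω t)
          (contPt.intervalIntegrable y x)
      have hsub : Set.uIoc y x ⊆ Set.Icc (-(2:ℝ)^(m+1)) (2^(m+1)) := by
        intro t ht
        rw [Set.mem_uIoc] at ht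
        have hx' := abs_le.mp hx
        have hy1 := hy.1; have hy2 := hy.2
        rcases ht with ⟨h1, h2⟩ | ⟨h1, h2⟩ <;> constructor <;> linarith
      have habs : |∫ t in y..x, pdx ψ t ω|
          ≤ ∫ t in Set.Icc (-(2:ℝ)^(m+1)) (2^(m+1)), |pdx ψ t ω| := by
        have h1 : |∫ t in y..x, pdx ψ t ω| ≤ ∫ t in Set.uIoc y x, |pdx ψ t ω| := by
          simpa [Real.norm_eq_abs] using
            intervalIntegral.norm_integral_le_integral_norm_uIoc
              (f := fun t => pdx ψ t ω) (a := y) (b := x) (μ := volume)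
        refine h1.trans (setIntegral_mono_set hintIcc ?_ ?_)
        · exact Filter.Eventually.of_forall fun t => abs_nonneg _
        · exact HasSubset.Subset.eventuallyLE hsub
      have := abs_add_le (ψ y ω) (∫ t in y..x, pdx ψ t ω)
      rw [hftc] at this
      calc |ψ x ω| = |ψ y ω + (ψ x ω - ψ y ω)| := by ring_nf
        _ ≤ |ψ y ω| + |ψ x ω - ψ y ω| := abs_add_le _ _
        _ ≤ _ := by
            rw [← hftc]
            exact add_le_add_right habs _
    have hIcc12vol : (volume (Set.Icc (1:ℝ) 2)).toReal = 1 := by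
      rw [Real.volume_Icc]; norm_num
    have havg : |ψ x ω| ≤ (∫ y in Set.Icc (1:ℝ) 2, |ψ y ω|)
        + ∫ t in Set.Icc (-(2:ℝ)^(m+1)) (2^(m+1)), |pdx ψ t ω| := by
      have hconstInt : IntegrableOn
          (fun _ : ℝ => ∫ t in Set.Icc (-(2:ℝ)^(m+1)) (2^(m+1)), |pdx ψ t ω|)
          (Set.Icc (1:ℝ) 2) := (integrableOn_const_iff).mpr (Or.inr measure_Icc_lt_top)
      calc |ψ x ω| = ∫ _ in Set.Icc (1:ℝ) 2, |ψ x ω| := by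
            rw [setIntegral_const, measureReal_def, hIcc12vol, one_smul]
        _ ≤ ∫ y in Set.Icc (1:ℝ) 2,
              (|ψ y ω| + ∫ t in Set.Icc (-(2:ℝ)^(m+1)) (2^(m+1)), |pdx ψ t ω|) :=
            setIntegral_mono_on ((integrableOn_const_iff).mpr (Or.inr measure_Icc_lt_top))
              ((contψt.abs.integrableOn_Icc).add hconstInt) measurableSet_Icc hD
        _ = (∫ y in Set.Icc (1:ℝ) 2, |ψ y ω|)
              + ∫ t in Set.Icc (-(2:ℝ)^(m+1)) (2^(m+1)), |pdx ψ t ω| := by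
            rw [integral_add (contψt.abs.integrableOn_Icc) hconstInt,
              setIntegral_const, measureReal_def, hIcc12vol, one_smul]
    have hg1 : (∫ y in Set.Icc (1:ℝ) 2, |ψ y ω|)
        ≤ Real.sqrt (∫ y in Set.Icc (1:ℝ) 2, (ψ y ω)^2) := by
      have := setIntegral_abs_le_sqrt (Set.Icc 1 2) measure_Icc_lt_top (fun y => ψ y ω)
        contψt.integrableOn_Icc ((contψt.pow 2).integrableOn_Icc)
      rwa [hIcc12vol, Real.sqrt_one, one_mul] at this
    have hsplit : ∀ n : ℕ, (∫ t in Set.Icc (-(2:ℝ)^(n+1)) ((2:ℝ)^(n+1)), |pdx ψ t ω|)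
        ≤ (∫ t in {x : ℝ | |x| < 1}, |pdx ψ t ω|)
          + ∑ i ∈ Finset.range (n+1), ∫ t in annAbs i, |pdx ψ t ω| := by
      intro n
      induction n with
      | zero =>
        have hsub0 : Set.Icc (-(2:ℝ)^(0+1)) ((2:ℝ)^(0+1)) ⊆ {x : ℝ | |x| < 1} ∪ annAbs 0 := by
          intro t ht
          rcases lt_or_ge |t| 1 with h | h
          · exact Or.inl h
          · refine Or.inr ⟨by simpa using h, ?_⟩
            rw [abs_le]; simpa using ht
        have hUnionInt : IntegrableOn (fun t => |pdx ψ t ω|) ({x : ℝ | |x| < 1} ∪ annAbs 0) := by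
          apply (contPt.abs.integrableOn_Icc (a := -(2:ℝ)) (b := 2)).mono_set
          intro t ht
          rcases ht with h | h
          · have := le_of_lt (show |t| < 1 from h)
            rw [Set.mem_Icc]; constructor <;> nlinarith [abs_le.mp this]
          · have h2 := h.2
            rw [Set.mem_Icc]
            have := abs_le.mp (by simpa using h2 : |t| ≤ (2:ℝ))
            exact this
        calc (∫ t in Set.Icc (-(2:ℝ)^(0+1)) ((2:ℝ)^(0+1)), |pdx ψ t ω|)
            ≤ ∫ t in {x : ℝ | |x| < 1} ∪ annAbs 0, |pdx ψ t ω| :=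
              setIntegral_mono_set hUnionInt
                (Filter.Eventually.of_forall fun t => abs_nonneg _)
                (HasSubset.Subset.eventuallyLE hsub0)
          _ ≤ (∫ t in {x : ℝ | |x| < 1}, |pdx ψ t ω|)
                + ∫ t in annAbs 0, |pdx ψ t ω| :=
              setIntegral_union_le _ (fun t => abs_nonneg _) _ _ ball_meas (annAbs_meas 0)
                hUnionInt
          _ = _ := by rw [Finset.sum_range_one]
      | succ n ih =>
        have hsubn : Set.Icc (-(2:ℝ)^(n+2)) ((2:ℝ)^(n+2))
            ⊆ Set.Icc (-(2:ℝ)^(n+1)) ((2:ℝ)^(n+1)) ∪ annAbs (n+1) := by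
          intro t ht
          rw [Set.mem_Icc] at ht
          rcases le_or_gt |t| ((2:ℝ)^(n+1)) with h | h
          · left; rw [Set.mem_Icc]; exact abs_le.mp h
          · right
            refine ⟨le_of_lt h, ?_⟩
            rw [abs_le]; exact ht
        have hUnionInt : IntegrableOn (fun t => |pdx ψ t ω|)
            (Set.Icc (-(2:ℝ)^(n+1)) ((2:ℝ)^(n+1)) ∪ annAbs (n+1)) := by
          apply (contPt.abs.integrableOn_Icc (a := -(2:ℝ)^(n+2)) (b := (2:ℝ)^(n+2))).mono_set
          intro t ht
          have hmono : (2:ℝ)^(n+1) ≤ 2^(n+2) := pow_le_pow_right₀ one_le_two (by omega)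
          rcases ht with h | h
          · rw [Set.mem_Icc] at h ⊢; constructor <;> linarith
          · have := abs_le.mp h.2
            rw [Set.mem_Icc]; exact this
        calc (∫ t in Set.Icc (-(2:ℝ)^(n+1+1)) ((2:ℝ)^(n+1+1)), |pdx ψ t ω|)
            ≤ ∫ t in Set.Icc (-(2:ℝ)^(n+1)) ((2:ℝ)^(n+1)) ∪ annAbs (n+1), |pdx ψ t ω| :=
              setIntegral_mono_set hUnionInt
                (Filter.Eventually.of_forall fun t => abs_nonneg _)
                (HasSubset.Subset.eventuallyLE (by
                  have : n+1+1 = n+2 := rfl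
                  rw [this]; exact hsubn))
          _ ≤ (∫ t in Set.Icc (-(2:ℝ)^(n+1)) ((2:ℝ)^(n+1)), |pdx ψ t ω|)
                + ∫ t in annAbs (n+1), |pdx ψ t ω| :=
              setIntegral_union_le _ (fun t => abs_nonneg _) _ _ measurableSet_Icc
                (annAbs_meas (n+1)) hUnionInt
          _ ≤ ((∫ t in {x : ℝ | |x| < 1}, |pdx ψ t ω|)
                + ∑ i ∈ Finset.range (n+1), ∫ t in annAbs i, |pdx ψ t ω|)
                + ∫ t in annAbs (n+1), |pdx ψ t ω| := by
              exact add_le_add_left ih _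
          _ = _ := by rw [Finset.sum_range_succ (fun i => ∫ t in annAbs i, |pdx ψ t ω|) (n+1)]; ring
    have hball_cs : (∫ t in {x : ℝ | |x| < 1}, |pdx ψ t ω|)
        ≤ Real.sqrt 2 * Real.sqrt (∫ t in {x : ℝ | |x| < 1}, (pdx ψ t ω)^2) := by
      have hint1 : IntegrableOn (fun t => pdx ψ t ω) {x : ℝ | |x| < 1} :=
        (contPt.integrableOn_Icc (a := -(1:ℝ)) (b := 1)).mono_set
          (ball_subset 1 le_rfl)
      have hint2 : IntegrableOn (fun t => (pdx ψ t ω)^2) {x : ℝ | |x| < 1} :=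
        ((contPt.pow 2).integrableOn_Icc (a := -(1:ℝ)) (b := 1)).mono_set
          (ball_subset 1 le_rfl)
      have := setIntegral_abs_le_sqrt {x : ℝ | |x| < 1} ball_vol_lt_top
        (fun t => pdx ψ t ω) hint1 hint2
      rwa [ball_vol] at this
    have hann_cs : ∀ i : ℕ, (∫ t in annAbs i, |pdx ψ t ω|)
        ≤ Real.sqrt ((2:ℝ)^(i+1)) * Real.sqrt (∫ t in annAbs i, (pdx ψ t ω)^2) := by
      intro i
      have hint1 : IntegrableOn (fun t => pdx ψ t ω) (annAbs i) :=
        (contPt.integrableOn_Icc (a := -(2:ℝ)^(i+1)) (b := (2:ℝ)^(i+1))).mono_set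
          (annAbs_subset i)
      have hint2 : IntegrableOn (fun t => (pdx ψ t ω)^2) (annAbs i) :=
        ((contPt.pow 2).integrableOn_Icc (a := -(2:ℝ)^(i+1)) (b := (2:ℝ)^(i+1))).mono_set
          (annAbs_subset i)
      have := setIntegral_abs_le_sqrt (annAbs i) (annAbs_vol_lt_top i)
        (fun t => pdx ψ t ω) hint1 hint2
      rwa [annAbs_vol i] at this
    calc |ψ x ω| ≤ (∫ y in Set.Icc (1:ℝ) 2, |ψ y ω|)
          + ∫ t in Set.Icc (-(2:ℝ)^(m+1)) (2^(m+1)), |pdx ψ t ω| := havg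
      _ ≤ Real.sqrt (∫ y in Set.Icc (1:ℝ) 2, (ψ y ω)^2)
          + ((∫ t in {x : ℝ | |x| < 1}, |pdx ψ t ω|)
            + ∑ i ∈ Finset.range (m+1), ∫ t in annAbs i, |pdx ψ t ω|) :=
          add_le_add hg1 (hsplit m)
      _ ≤ _ := by
          rw [add_assoc]
          apply add_le_add_right
          exact add_le_add hball_cs (Finset.sum_le_sum fun i _ => hann_cs i)
  -- integrability of the ω-functions
  have hGf_int : Integrable (fun ω => ∫ y in Set.Icc (1:ℝ) 2, (ψ y ω)^2) sphMeas :=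
    int_sph_fn (fun y ω => (ψ y ω)^2) contψ2 (Set.Icc 1 2) measurableSet_Icc 2
      (Set.Icc_subset_Icc (by norm_num) le_rfl)
  have hUb_int : Integrable (fun ω => ∫ t in {x : ℝ | |x| < 1}, (pdx ψ t ω)^2) sphMeas :=
    int_sph_fn (fun t ω => (pdx ψ t ω)^2) contP2 {x : ℝ | |x| < 1} ball_meas 1
      (ball_subset 1 le_rfl)
  have hUi_int : ∀ i : ℕ, Integrable (fun ω => ∫ t in annAbs i, (pdx ψ t ω)^2) sphMeas :=
    fun i => int_sph_fn (fun t ω => (pdx ψ t ω)^2) contP2 (annAbs i) (annAbs_meas i)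
      ((2:ℝ)^(i+1)) (annAbs_subset i)
  -- Fubini facts
  have hdblnn : ∀ (A' : Set ℝ) (f : ℝ → Sph2 → ℝ),
      (0:ℝ) ≤ ∫ x in A', ∫ ω, (f x ω)^2 ∂sphMeas :=
    fun A' f => integral_nonneg (fun x => integral_nonneg fun ω => sq_nonneg _)
  have hGIle : (∫ ω, (∫ y in Set.Icc (1:ℝ) 2, (ψ y ω)^2) ∂sphMeas) ≤ a0^2 := by
    rw [← swapInt (fun y ω => (ψ y ω)^2) contψ2 (Set.Icc 1 2) measurableSet_Icc 2
      (Set.Icc_subset_Icc (by norm_num) le_rfl)]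
    have hmono : (∫ y in Set.Icc (1:ℝ) 2, ∫ ω, (ψ y ω)^2 ∂sphMeas)
        ≤ ∫ y in annAbs 0, ∫ ω, (ψ y ω)^2 ∂sphMeas := by
      apply setIntegral_mono_set
        (intOn_inner (fun y ω => (ψ y ω)^2) contψ2 (annAbs 0) (annAbs_meas 0)
          ((2:ℝ)^(0+1)) (annAbs_subset 0))
        (Filter.Eventually.of_forall fun y => integral_nonneg fun ω => sq_nonneg _)
        (HasSubset.Subset.eventuallyLE Icc12_subset)
    refine hmono.trans ?_
    rw [ha0def, L2nrm, Real.sq_sqrt (hdblnn _ _)]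
  have hUbI : (∫ ω, (∫ t in {x : ℝ | |x| < 1}, (pdx ψ t ω)^2) ∂sphMeas) = bb^2 := by
    rw [← swapInt (fun t ω => (pdx ψ t ω)^2) contP2 {x : ℝ | |x| < 1} ball_meas 1
      (ball_subset 1 le_rfl), hbbdef, L2nrm, Real.sq_sqrt (hdblnn _ _)]
  have hUiI : ∀ i : ℕ,
      (∫ ω, (∫ t in annAbs i, (pdx ψ t ω)^2) ∂sphMeas) = (bi i)^2 := by
    intro i
    rw [← swapInt (fun t ω => (pdx ψ t ω)^2) contP2 (annAbs i) (annAbs_meas i)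
      ((2:ℝ)^(i+1)) (annAbs_subset i)]
    simp only [hbidef]
    rw [L2nrm, Real.sq_sqrt (hdblnn _ _)]
  -- the slice integrated in ω
  have omega_slice : ∀ (m : ℕ) (x : ℝ), |x| ≤ 2^(m+1) →
      (∫ ω, (ψ x ω)^2 ∂sphMeas)
        ≤ (2:ℝ)^(ε*m) * (3*a0^2 + 6*bb^2
          + 3*cε * ∑ i ∈ Finset.range (m+1), (2:ℝ)^(-(ε*i)) * (2:ℝ)^(i+1) * (bi i)^2) := by
    intro m x hx
    have hpt : ∀ ω : Sph2, (ψ x ω)^2 ≤ (2:ℝ)^(ε*m)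
        * (3*(∫ y in Set.Icc (1:ℝ) 2, (ψ y ω)^2)
          + 6*(∫ t in {x : ℝ | |x| < 1}, (pdx ψ t ω)^2)
          + 3*cε * ∑ i ∈ Finset.range (m+1), (2:ℝ)^(-(ε*i)) * (2:ℝ)^(i+1)
              * (∫ t in annAbs i, (pdx ψ t ω)^2)) := by
      intro ω
      exact weighted_sq ε cε hε0 hcεdef m _ _ _
        (integral_nonneg fun y => sq_nonneg _)
        (integral_nonneg fun t => sq_nonneg _)
        (fun i => integral_nonneg fun t => sq_nonneg _)
        (ψ x ω) (slice m x hx ω)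
    have hsum_int : Integrable (fun ω => ∑ i ∈ Finset.range (m+1),
        (2:ℝ)^(-(ε*i)) * (2:ℝ)^(i+1) * (∫ t in annAbs i, (pdx ψ t ω)^2)) sphMeas :=
      integrable_finset_sum _ (fun i _ => (hUi_int i).const_mul _)
    have hRHS_int : Integrable (fun ω => (2:ℝ)^(ε*m)
        * (3*(∫ y in Set.Icc (1:ℝ) 2, (ψ y ω)^2)
          + 6*(∫ t in {x : ℝ | |x| < 1}, (pdx ψ t ω)^2)
          + 3*cε * ∑ i ∈ Finset.range (m+1), (2:ℝ)^(-(ε*i)) * (2:ℝ)^(i+1)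
              * (∫ t in annAbs i, (pdx ψ t ω)^2))) sphMeas :=
      (((hGf_int.const_mul 3).add (hUb_int.const_mul 6)).add
        (hsum_int.const_mul (3*cε))).const_mul _
    have hLHS_int : Integrable (fun ω => (ψ x ω)^2) sphMeas :=
      int_omega_slice (fun x ω => (ψ x ω)^2) contψ2 x
    calc (∫ ω, (ψ x ω)^2 ∂sphMeas) ≤ _ := integral_mono hLHS_int hRHS_int hpt
      _ = (2:ℝ)^(ε*m) * (3*(∫ ω, (∫ y in Set.Icc (1:ℝ) 2, (ψ y ω)^2) ∂sphMeas)
          + 6*(∫ ω, (∫ t in {x : ℝ | |x| < 1}, (pdx ψ t ω)^2) ∂sphMeas)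
          + 3*cε * ∑ i ∈ Finset.range (m+1), (2:ℝ)^(-(ε*i)) * (2:ℝ)^(i+1)
              * (∫ ω, (∫ t in annAbs i, (pdx ψ t ω)^2) ∂sphMeas)) := by
        rw [integral_const_mul]
        congr 1
        rw [integral_add
          (f := fun ω => 3*(∫ y in Set.Icc (1:ℝ) 2, (ψ y ω)^2)
            + 6*(∫ t in {x : ℝ | |x| < 1}, (pdx ψ t ω)^2))
          (g := fun ω => 3*cε * ∑ i ∈ Finset.range (m+1), (2:ℝ)^(-(ε*i)) * (2:ℝ)^(i+1)
              * (∫ t in annAbs i, (pdx ψ t ω)^2))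
          ((hGf_int.const_mul 3).add (hUb_int.const_mul 6))
          (hsum_int.const_mul (3*cε))]
        rw [integral_add
          (f := fun ω => 3*(∫ y in Set.Icc (1:ℝ) 2, (ψ y ω)^2))
          (g := fun ω => 6*(∫ t in {x : ℝ | |x| < 1}, (pdx ψ t ω)^2))
          (hGf_int.const_mul 3) (hUb_int.const_mul 6)]
        rw [integral_const_mul, integral_const_mul, integral_const_mul]
        congr 2
        rw [integral_finset_sum _ (fun i _ => (hUi_int i).const_mul _)]
        exact Finset.sum_congr rfl fun i _ => integral_const_mul _ _
      _ ≤ _ := by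
        rw [hUbI]
        rw [show (∑ i ∈ Finset.range (m+1), (2:ℝ)^(-(ε*i)) * (2:ℝ)^(i+1)
              * (∫ ω, (∫ t in annAbs i, (pdx ψ t ω)^2) ∂sphMeas))
            = ∑ i ∈ Finset.range (m+1), (2:ℝ)^(-(ε*i)) * (2:ℝ)^(i+1) * (bi i)^2 from
          Finset.sum_congr rfl fun i _ => by rw [hUiI i]]
        apply mul_le_mul_of_nonneg_left ?_ (hRpos _).le
        have := mul_le_mul_of_nonneg_left hGIle (by norm_num : (0:ℝ) ≤ 3)
        linarith
  -- core estimate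
  have core : ∀ (m : ℕ) (A' : Set ℝ), MeasurableSet A' →
      A' ⊆ Set.Icc (-(2:ℝ)^(m+1)) ((2:ℝ)^(m+1)) → ∀ W : ℝ, 0 ≤ W →
      (∀ x ∈ A', jap x ^ (-s) ≤ W) →
      (∫ x in A', ∫ ω, (jap x ^ (-s) * ψ x ω)^2 ∂sphMeas)
        ≤ (volume A').toReal * (W^2
          * ((2:ℝ)^(ε*m) * (3*a0^2 + 6*bb^2
            + 3*cε * ∑ i ∈ Finset.range (m+1),
                (2:ℝ)^(-(ε*i)) * (2:ℝ)^(i+1) * (bi i)^2))) := by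
    intro m A' hA'meas hA'sub W hW0 hWbd
    have hIon : IntegrableOn (fun x => ∫ ω, (jap x ^ (-s) * ψ x ω)^2 ∂sphMeas) A' :=
      intOn_inner (fun x ω => (jap x ^ (-s) * ψ x ω)^2) contF2 A' hA'meas _ hA'sub
    calc (∫ x in A', ∫ ω, (jap x ^ (-s) * ψ x ω)^2 ∂sphMeas)
        ≤ ∫ _ in A', (W^2 * ((2:ℝ)^(ε*m) * (3*a0^2 + 6*bb^2
            + 3*cε * ∑ i ∈ Finset.range (m+1),
                (2:ℝ)^(-(ε*i)) * (2:ℝ)^(i+1) * (bi i)^2))) := by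
          apply setIntegral_mono_on hIon
            ((integrableOn_const_iff).mpr (Or.inr
              (lt_of_le_of_lt (measure_mono hA'sub) measure_Icc_lt_top))) hA'meas
          intro x hx
          have hxabs : |x| ≤ 2^(m+1) := abs_le.mpr (hA'sub hx)
          have heq : (∫ ω, (jap x ^ (-s) * ψ x ω)^2 ∂sphMeas)
              = (jap x ^ (-s))^2 * ∫ ω, (ψ x ω)^2 ∂sphMeas := by
            rw [show (fun ω => (jap x ^ (-s) * ψ x ω)^2)
                = fun ω => (jap x ^ (-s))^2 * (ψ x ω)^2 from funext fun ω => by ring]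
            exact integral_const_mul _ _
          rw [heq]
          apply mul_le_mul (pow_le_pow_left₀ (Real.rpow_nonneg (jap_pos x).le _) (hWbd x hx) 2)
            (omega_slice m x hxabs)
            (integral_nonneg fun ω => sq_nonneg _) (sq_nonneg W)
      _ = (volume A').toReal * _ := by rw [setIntegral_const, smul_eq_mul, measureReal_def]
  -- weight comparisons
  have hwt : ∀ (i : ℕ) (x : ℝ), (2:ℝ)^(i:ℕ) ≤ jap x → jap x ≤ (2:ℝ)^(i+2) →
      jap x ^ (s-1) ≤ κ * (2:ℝ)^((s-1)*i) := by
    intro i x h1 h2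
    rcases le_or_gt 1 s with hs1 | hs1
    · calc jap x ^ (s-1) ≤ ((2:ℝ)^(i+2)) ^ (s-1) :=
          Real.rpow_le_rpow (jap_pos x).le h2 (by linarith)
        _ = (2:ℝ)^((((i+2:ℕ)):ℝ)*(s-1)) := by
            rw [hR2 (i+2)]
            exact (Real.rpow_mul (le_of_lt two_pos) _ _).symm
        _ ≤ κ * (2:ℝ)^((s-1)*i) := by
            rw [hκdef, hRmul]
            apply Real.rpow_le_rpow_of_exponent_le one_le_two
            push_cast
            nlinarith [le_abs_self (s-1)]
    · calc jap x ^ (s-1) ≤ ((2:ℝ)^(i:ℕ)) ^ (s-1) :=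
          Real.rpow_le_rpow_of_nonpos (by positivity) h1 (by linarith)
        _ = (2:ℝ)^((s-1)*i) := by
            rw [hR2 i, ← Real.rpow_mul (le_of_lt two_pos)]
            congr 1
            ring
        _ ≤ κ * (2:ℝ)^((s-1)*i) :=
            le_mul_of_one_le_left (hRpos _).le (by rw [hκdef]; exact hRone _ (by positivity))
  have hcε0 : (0:ℝ) < cε := by
    rw [hcεdef]
    have : (2:ℝ)^(-ε) < 1 := Real.rpow_lt_one_of_one_lt_of_neg one_lt_two (by linarith)
    exact inv_pos.mpr (by linarith)
  have hjap_ann : ∀ (i : ℕ), ∀ x ∈ annAbs i, (2:ℝ)^(i:ℕ) ≤ jap x ∧ jap x ≤ (2:ℝ)^(i+2) := by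
    intro i x hx
    obtain ⟨h1, h2⟩ := hx
    constructor
    · exact le_trans h1 (jap_ge_abs x)
    · refine (jap_le x).trans ?_
      have hp : (1:ℝ) ≤ 2^(i+1) := by
        have := pow_le_pow_right₀ (one_le_two (α := ℝ)) (Nat.zero_le (i+1))
        simpa using this
      have he : (2:ℝ)^(i+2) = 2^(i+1) + 2^(i+1) := by rw [pow_succ]; ring
      linarith
  have hjap_ball : ∀ x ∈ {x : ℝ | |x| < 1}, (2:ℝ)^(0:ℕ) ≤ jap x ∧ jap x ≤ (2:ℝ)^(0+2) := by
    intro x hx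
    have hx' : |x| < 1 := hx
    constructor
    · simpa using jap_ge_one x
    · have := jap_le x
      norm_num
      linarith
  have hptwt : ∀ (i : ℕ) (x : ℝ), (2:ℝ)^(i:ℕ) ≤ jap x → jap x ≤ (2:ℝ)^(i+2) →
      ∀ ω : Sph2, (pdx ψ x ω)^2
        ≤ (κ*(2:ℝ)^((s-1)*i))^2 * (jap x ^ (1-s) * pdx ψ x ω)^2 := by
    intro i x h1 h2 ω
    have hwtb := hwt i x h1 h2
    have hfact : pdx ψ x ω = jap x ^ (s-1) * (jap x ^ (1-s) * pdx ψ x ω) := by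
      rw [← mul_assoc, ← Real.rpow_add (jap_pos x)]
      norm_num
    calc (pdx ψ x ω)^2 = (jap x ^ (s-1))^2 * (jap x ^ (1-s) * pdx ψ x ω)^2 := by
          conv_lhs => rw [hfact]
          rw [mul_pow]
      _ ≤ (κ*(2:ℝ)^((s-1)*i))^2 * (jap x ^ (1-s) * pdx ψ x ω)^2 :=
          mul_le_mul_of_nonneg_right
            (pow_le_pow_left₀ (Real.rpow_nonneg (jap_pos x).le _) hwtb 2) (sq_nonneg _)
  have hbi2 : ∀ i : ℕ, (bi i)^2 ≤ (κ*(2:ℝ)^((s-1)*i) * BB i)^2 := by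
    intro i
    have hd : (∫ x in annAbs i, ∫ ω, (pdx ψ x ω)^2 ∂sphMeas)
        ≤ ∫ x in annAbs i, ∫ ω,
            (κ*(2:ℝ)^((s-1)*i))^2 * (jap x ^ (1-s) * pdx ψ x ω)^2 ∂sphMeas :=
      dbl_mono _ _ contP2 (continuous_const.mul contG2) (annAbs i) (annAbs_meas i)
        ((2:ℝ)^(i+1)) (annAbs_subset i)
        (fun x hx ω => hptwt i x (hjap_ann i x hx).1 (hjap_ann i x hx).2 ω)
    have hpull : (∫ x in annAbs i, ∫ ω,
          (κ*(2:ℝ)^((s-1)*i))^2 * (jap x ^ (1-s) * pdx ψ x ω)^2 ∂sphMeas)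
        = (κ*(2:ℝ)^((s-1)*i))^2
          * ∫ x in annAbs i, ∫ ω, (jap x ^ (1-s) * pdx ψ x ω)^2 ∂sphMeas := by
      simp only [integral_const_mul]
    have hBBi : (BB i)^2
        = ∫ x in annAbs i, ∫ ω, (jap x ^ (1-s) * pdx ψ x ω)^2 ∂sphMeas := by
      simp only [hBBdef]
      rw [L2nrm, Real.sq_sqrt (hdblnn _ _)]
    have hbii : (bi i)^2 = ∫ x in annAbs i, ∫ ω, (pdx ψ x ω)^2 ∂sphMeas := by
      simp only [hbidef]
      rw [L2nrm, Real.sq_sqrt (hdblnn _ _)]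
    calc (bi i)^2 = _ := hbii
      _ ≤ _ := hd
      _ = (κ*(2:ℝ)^((s-1)*i))^2 * (BB i)^2 := by rw [hpull, hBBi]
      _ = (κ*(2:ℝ)^((s-1)*i) * BB i)^2 := by ring
  have hbb2 : bb^2 ≤ (κ*Bm)^2 := by
    have hd : (∫ x in {x : ℝ | |x| < 1}, ∫ ω, (pdx ψ x ω)^2 ∂sphMeas)
        ≤ ∫ x in {x : ℝ | |x| < 1}, ∫ ω,
            (κ*(2:ℝ)^((s-1)*(0:ℕ)))^2 * (jap x ^ (1-s) * pdx ψ x ω)^2 ∂sphMeas :=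
      dbl_mono _ _ contP2 (continuous_const.mul contG2) {x : ℝ | |x| < 1} ball_meas
        1 (ball_subset 1 le_rfl)
        (fun x hx ω => hptwt 0 x (hjap_ball x hx).1 (hjap_ball x hx).2 ω)
    have hpull : (∫ x in {x : ℝ | |x| < 1}, ∫ ω,
          (κ*(2:ℝ)^((s-1)*(0:ℕ)))^2 * (jap x ^ (1-s) * pdx ψ x ω)^2 ∂sphMeas)
        = (κ*(2:ℝ)^((s-1)*(0:ℕ)))^2
          * ∫ x in {x : ℝ | |x| < 1}, ∫ ω, (jap x ^ (1-s) * pdx ψ x ω)^2 ∂sphMeas := by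
      simp only [integral_const_mul]
    have hBm2 : Bm^2
        = ∫ x in {x : ℝ | |x| < 1}, ∫ ω, (jap x ^ (1-s) * pdx ψ x ω)^2 ∂sphMeas := by
      rw [hBmdef, L2nrm, Real.sq_sqrt (hdblnn _ _)]
    have hbb' : bb^2 = ∫ x in {x : ℝ | |x| < 1}, ∫ ω, (pdx ψ x ω)^2 ∂sphMeas := by
      rw [hbbdef, L2nrm, Real.sq_sqrt (hdblnn _ _)]
    have hcoeff : (κ*(2:ℝ)^((s-1)*(0:ℕ)))^2 = κ^2 := by
      norm_num
    calc bb^2 = _ := hbb'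
      _ ≤ _ := hd
      _ = (κ*(2:ℝ)^((s-1)*(0:ℕ)))^2 * Bm^2 := by rw [hpull, hBm2]
      _ = (κ*Bm)^2 := by rw [hcoeff]; ring
  have hMk : ∀ m : ℕ,
      (2:ℝ)^(ε*m) * (3*a0^2 + 6*bb^2
        + 3*cε * ∑ i ∈ Finset.range (m+1), (2:ℝ)^(-(ε*i)) * (2:ℝ)^(i+1) * (bi i)^2)
      ≤ (2:ℝ)^(ε*m) * (3*a0^2 + 6*(κ*Bm)^2
        + 3*cε * ∑ i ∈ Finset.range (m+1),
            (2:ℝ)^(-(ε*i)) * (2:ℝ)^(i+1) * (κ*(2:ℝ)^((s-1)*i)*BB i)^2) := by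
    intro m
    apply mul_le_mul_of_nonneg_left ?_ (hRpos _).le
    have hsum : (∑ i ∈ Finset.range (m+1), (2:ℝ)^(-(ε*i)) * (2:ℝ)^(i+1) * (bi i)^2)
        ≤ ∑ i ∈ Finset.range (m+1),
            (2:ℝ)^(-(ε*i)) * (2:ℝ)^(i+1) * (κ*(2:ℝ)^((s-1)*i)*BB i)^2 :=
      Finset.sum_le_sum fun i _ => mul_le_mul_of_nonneg_left (hbi2 i)
        (mul_nonneg (hRpos _).le (by positivity))
    have h1 : 6*bb^2 ≤ 6*(κ*Bm)^2 := by linarith [hbb2]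
    have h2 : 3*cε * (∑ i ∈ Finset.range (m+1), (2:ℝ)^(-(ε*i)) * (2:ℝ)^(i+1) * (bi i)^2)
        ≤ 3*cε * ∑ i ∈ Finset.range (m+1),
            (2:ℝ)^(-(ε*i)) * (2:ℝ)^(i+1) * (κ*(2:ℝ)^((s-1)*i)*BB i)^2 :=
      mul_le_mul_of_nonneg_left hsum (by positivity)
    linarith
  -- conclude
  have hfinal := final_alg s ε κ cε hs hεdef hκdef hcεdef k a0 Bm BB ha0nn hBmnn hBBnn
  rcases hA with hAann | ⟨hAball, hk0⟩
  · subst hAann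
    have hW : ∀ x ∈ annAbs k, jap x ^ (-s) ≤ (2:ℝ)^((k:ℝ)*(-s)) := by
      intro x hx
      have h2k : (2:ℝ)^(k:ℕ) ≤ jap x := le_trans hx.1 (jap_ge_abs x)
      calc jap x ^ (-s) ≤ ((2:ℝ)^(k:ℕ)) ^ (-s) :=
          Real.rpow_le_rpow_of_nonpos (by positivity) h2k (by linarith)
        _ = (2:ℝ)^((k:ℝ)*(-s)) := by
            rw [hR2 k]
            exact (Real.rpow_mul (le_of_lt two_pos) _ _).symm
    have h1 := core k (annAbs k) (annAbs_meas k) (annAbs_subset k)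
      ((2:ℝ)^((k:ℝ)*(-s))) (hRpos _).le hW
    have hL2sq : (L2nrm (annAbs k) (fun x ω => jap x ^ (-s) * ψ x ω))^2
        = ∫ x in annAbs k, ∫ ω, (jap x ^ (-s) * ψ x ω)^2 ∂sphMeas := by
      rw [L2nrm, Real.sq_sqrt (hdblnn _ _)]
    rw [hL2sq]
    refine le_trans (h1.trans ?_) hfinal
    rw [annAbs_vol k]
    exact mul_le_mul_of_nonneg_left
      (mul_le_mul_of_nonneg_left (hMk k) (sq_nonneg _)) (by positivity)
  · subst hAball
    subst hk0
    have hW : ∀ x ∈ {x : ℝ | |x| < 1}, jap x ^ (-s) ≤ (1:ℝ) := fun x _ =>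
      Real.rpow_le_one_of_one_le_of_nonpos (jap_ge_one x) (by linarith)
    have hsubb : {x : ℝ | |x| < 1} ⊆ Set.Icc (-(2:ℝ)^(0+1)) ((2:ℝ)^(0+1)) := by
      have := ball_subset 2 (by norm_num)
      intro x hx
      have h := this hx
      simpa using h
    have h1 := core 0 {x : ℝ | |x| < 1} ball_meas hsubb 1 zero_le_one hW
    have hL2sq : (L2nrm {x : ℝ | |x| < 1} (fun x ω => jap x ^ (-s) * ψ x ω))^2
        = ∫ x in {x : ℝ | |x| < 1}, ∫ ω, (jap x ^ (-s) * ψ x ω)^2 ∂sphMeas := by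
      rw [L2nrm, Real.sq_sqrt (hdblnn _ _)]
    rw [hL2sq]
    refine le_trans (h1.trans ?_) hfinal
    rw [ball_vol]
    have e2 : (2:ℝ)^(0+1) * (((2:ℝ)^(((0:ℕ):ℝ)*(-s)))^2 * ((2:ℝ)^(ε*(0:ℕ)) * (3*a0^2 + 6*(κ*Bm)^2
          + 3*cε * ∑ i ∈ Finset.range (0+1),
              (2:ℝ)^(-(ε*i)) * (2:ℝ)^(i+1) * (κ*(2:ℝ)^((s-1)*i)*BB i)^2)))
        = 2 * (1^2 * ((2:ℝ)^(ε*(0:ℕ)) * (3*a0^2 + 6*(κ*Bm)^2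
          + 3*cε * ∑ i ∈ Finset.range (0+1),
              (2:ℝ)^(-(ε*i)) * (2:ℝ)^(i+1) * (κ*(2:ℝ)^((s-1)*i)*BB i)^2))) := by
      norm_num
    rw [e2]
    exact mul_le_mul_of_nonneg_left
      (mul_le_mul_of_nonneg_left (hMk 0) (by norm_num)) (by norm_num)


end HPaux

/-- Hardy–Poincaré estimate, eq. (index_hardy) of the paper.
For each `s > 1/2` there is `C_s` such that for all `1 ≤ p ≤ ∞`, all `j ≥ 0`, and all
smooth compactly supported `ψ : ℝ×S² → ℝ`:
`‖⟨x⟩^{-s}ψ‖_{ℓ^pL²(|x|≤2^j)} ≤ C_s ( ‖χ_0 ψ‖_{L²} + ‖⟨x⟩^{1-s}∂_xψ‖_{ℓ^pL²(|x|≤2^j)} )`. -/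
theorem hardy_poincare (s : ℝ) (hs : 1 / 2 < s) :
    ∃ C : ℝ, ∀ p : ℝ≥0∞, 1 ≤ p → ∀ j : ℕ, ∀ ψ : ℝ → Sph2 → ℝ, SmoothOnCyl ψ →
      (∃ R : ℝ, ∀ (x : ℝ) (ω : Sph2), R ≤ |x| → ψ x ω = 0) →
      lpL2 p j (fun x ω => jap x ^ (-s) * ψ x ω)
        ≤ C * (L2nrm (annAbs 0) ψ + lpL2 p j (fun x ω => jap x ^ (1 - s) * pdx ψ x ω)) := by
  classical
  have hε0 : (0:ℝ) < s - 1/2 := by linarith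
  set ε : ℝ := s - 1/2 with hεdef
  set κ : ℝ := (2:ℝ)^(2*|s-1|) with hκdef
  set cε : ℝ := (1 - (2:ℝ)^(-ε))⁻¹ with hcεdef
  set ρ : ℝ := (2:ℝ)^(-(ε/2)) with hρdef
  set C4 : ℝ := 12*(1 + κ^2 + cε*κ^2) with hC4def
  set c : ℝ := Real.sqrt C4 / ρ with hcdef
  have hρpos : 0 < ρ := HPaux.hRpos _
  have hρlt1 : ρ < 1 := by
    rw [hρdef]
    exact Real.rpow_lt_one_of_one_lt_of_neg one_lt_two (by simp; linarith)
  have hcε0 : 0 < cε := by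
    rw [hcεdef]
    have : (2:ℝ)^(-ε) < 1 := Real.rpow_lt_one_of_one_lt_of_neg one_lt_two (by simp; linarith)
    exact inv_pos.mpr (by linarith)
  have hκ1 : (1:ℝ) ≤ κ := HPaux.hRone _ (by positivity)
  have hC4pos : 0 < C4 := by
    rw [hC4def]
    nlinarith [sq_nonneg κ, mul_nonneg hcε0.le (sq_nonneg κ)]
  have hsC4 : 0 ≤ Real.sqrt C4 := Real.sqrt_nonneg _
  have hcpos : 0 ≤ c := div_nonneg hsC4 hρpos.le
  have hcge : Real.sqrt C4 ≤ c := by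
    rw [hcdef, le_div_iff₀ hρpos]
    nlinarith
  have h1ρ : 0 < 1 - ρ := by linarith
  have hcoef_nn : 0 ≤ (1-ρ)⁻¹ + 1 := add_nonneg (inv_nonneg.mpr h1ρ.le) zero_le_one
  refine ⟨((1-ρ)⁻¹ + 1) * c, ?_⟩
  intro p hp j ψ hψs _hsupp
  obtain ⟨Ψ, hΨ, hψΨ⟩ := hψs
  set a0 : ℝ := L2nrm (annAbs 0) ψ with ha0def
  set Bm : ℝ := L2nrm {x : ℝ | |x| < 1} (fun x ω => jap x ^ (1-s) * pdx ψ x ω) with hBmdef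
  set BB : ℕ → ℝ := fun i => L2nrm (annAbs i) (fun x ω => jap x ^ (1-s) * pdx ψ x ω) with hBBdef
  have ha0nn : 0 ≤ a0 := Real.sqrt_nonneg _
  have hBmnn : 0 ≤ Bm := Real.sqrt_nonneg _
  have hBBnn : ∀ i, 0 ≤ BB i := fun i => Real.sqrt_nonneg _
  have hAM : ∀ (k : ℕ) (A : Set ℝ), (A = annAbs k ∨ (A = {x : ℝ | |x| < 1} ∧ k = 0)) →
      (L2nrm A (fun x ω => jap x ^ (-s) * ψ x ω))^2
        ≤ C4 * (ρ^k * a0 + ρ^k * Bm + ∑ i ∈ Finset.range (k+1), ρ^(k-i) * BB i)^2 := by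
    intro k A hA
    have h := HPaux.analytic_main s hs ψ Ψ hΨ hψΨ k A hA
    simp only [hC4def, hcdef, hρdef, hκdef, hcεdef, hεdef, ha0def, hBmdef, hBBdef]
    exact h
  -- square-root versions
  have hYnn : ∀ k : ℕ, 0 ≤ ρ^k * a0 + ρ^k * Bm + ∑ i ∈ Finset.range (k+1), ρ^(k-i) * BB i := by
    intro k
    have h1 : 0 ≤ ρ^k * a0 := mul_nonneg (pow_nonneg hρpos.le _) ha0nn
    have h2 : 0 ≤ ρ^k * Bm := mul_nonneg (pow_nonneg hρpos.le _) hBmnn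
    have h3 : 0 ≤ ∑ i ∈ Finset.range (k+1), ρ^(k-i) * BB i :=
      Finset.sum_nonneg fun i _ => mul_nonneg (pow_nonneg hρpos.le _) (hBBnn i)
    linarith
  have hsqrt : ∀ (k : ℕ) (A : Set ℝ), (A = annAbs k ∨ (A = {x : ℝ | |x| < 1} ∧ k = 0)) →
      L2nrm A (fun x ω => jap x ^ (-s) * ψ x ω)
        ≤ Real.sqrt C4 * (ρ^k * a0 + ρ^k * Bm + ∑ i ∈ Finset.range (k+1), ρ^(k-i) * BB i) := by
    intro k A hA
    calc L2nrm A (fun x ω => jap x ^ (-s) * ψ x ω)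
        = Real.sqrt ((L2nrm A (fun x ω => jap x ^ (-s) * ψ x ω))^2) :=
          (Real.sqrt_sq (Real.sqrt_nonneg _)).symm
      _ ≤ Real.sqrt (C4 * (ρ^k * a0 + ρ^k * Bm
            + ∑ i ∈ Finset.range (k+1), ρ^(k-i) * BB i)^2) :=
          Real.sqrt_le_sqrt (hAM k A hA)
      _ = Real.sqrt C4 * (ρ^k * a0 + ρ^k * Bm
            + ∑ i ∈ Finset.range (k+1), ρ^(k-i) * BB i) := by
          rw [Real.sqrt_mul hC4pos.le, Real.sqrt_sq (hYnn k)]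
  -- vectors
  set Vv : ℕ → ℝ := vecOf j Bm BB with hVvdef
  set wv : ℕ → ℝ := vecOf j (L2nrm {x : ℝ | |x| < 1} (fun x ω => jap x ^ (-s) * ψ x ω))
    (fun k => L2nrm (annAbs k) (fun x ω => jap x ^ (-s) * ψ x ω)) with hwvdef
  set uu : ℕ → ℝ := fun m => c * (Vv m + if m = 0 then a0 else 0) with huudef
  have hVv0 : ∀ n, 0 ≤ Vv n := by
    intro n
    rcases n with _ | m
    · exact hBmnn
    · rw [hVvdef]
      simp only [vecOf]
      split
      · exact hBBnn m
      · exact le_refl 0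
  have hVvN : ∀ n, j + 2 ≤ n → Vv n = 0 := by
    intro n hn
    rcases n with _ | m
    · omega
    · rw [hVvdef]
      simp only [vecOf]
      rw [if_neg (by omega)]
  have hwv0 : ∀ n, 0 ≤ wv n := by
    intro n
    rcases n with _ | m
    · exact Real.sqrt_nonneg _
    · rw [hwvdef]
      simp only [vecOf]
      split
      · exact Real.sqrt_nonneg _
      · exact le_refl 0
  have hwvN : ∀ n, j + 2 ≤ n → wv n = 0 := by
    intro n hn
    rcases n with _ | m
    · omega
    · rw [hwvdef]
      simp only [vecOf]
      rw [if_neg (by omega)]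
  have huu0 : ∀ n, 0 ≤ uu n := by
    intro n
    simp only [huudef]
    have := hVv0 n
    apply mul_nonneg hcpos
    split
    · linarith
    · linarith
  have huuN : ∀ n, j + 2 ≤ n → uu n = 0 := by
    intro n hn
    simp only [huudef]
    rw [hVvN n hn, if_neg (by omega), add_zero, mul_zero]
  have huu_eval : ∀ m : ℕ, m ≤ j → uu (m+1) = c * BB m := by
    intro m hm
    simp only [huudef]
    rw [if_neg (by omega), add_zero, hVvdef]
    simp only [vecOf]
    rw [if_pos hm]
  have huu_zero : uu 0 = c * (Bm + a0) := by
    simp only [huudef, hVvdef]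
    simp [vecOf]
  have hconv : ∀ n : ℕ, wv n ≤ (∑ m ∈ Finset.range (n+1), ρ^(n-m) * uu m) + uu (n+1) := by
    intro n
    rcases n with _ | k
    · -- base piece
      have hb := hsqrt 0 {x : ℝ | |x| < 1} (Or.inr ⟨rfl, rfl⟩)
      simp only [zero_add, pow_zero, one_mul, Finset.sum_range_one, Nat.sub_zero] at hb
      have hwv0' : wv 0 = L2nrm {x : ℝ | |x| < 1} (fun x ω => jap x ^ (-s) * ψ x ω) := rfl
      have hsum0 : (∑ m ∈ Finset.range (0+1), ρ^(0-m) * uu m) + uu 1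
          = uu 0 + uu 1 := by
        simp
      rw [hwv0', hsum0, huu_zero, huu_eval 0 (Nat.zero_le j)]
      have hstep : Real.sqrt C4 * (a0 + Bm + BB 0) ≤ c * (a0 + Bm + BB 0) :=
        mul_le_mul_of_nonneg_right hcge (by
          have := hBBnn 0
          linarith)
      calc L2nrm {x : ℝ | |x| < 1} (fun x ω => jap x ^ (-s) * ψ x ω)
          ≤ Real.sqrt C4 * (a0 + Bm + BB 0) := hb
        _ ≤ c * (a0 + Bm + BB 0) := hstep
        _ = c * (Bm + a0) + c * BB 0 := by ring
    · by_cases hkj : k ≤ j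
      · have hwvk : wv (k+1) = L2nrm (annAbs k) (fun x ω => jap x ^ (-s) * ψ x ω) := by
          rw [hwvdef]
          simp only [vecOf]
          rw [if_pos hkj]
        have hb := hsqrt k (annAbs k) (Or.inl rfl)
        have hsum_eq : ∑ m ∈ Finset.range (k+2), ρ^(k+1-m) * uu m
            = (∑ i ∈ Finset.range (k+1), ρ^(k-i) * (c * BB i)) + ρ^(k+1) * (c * (Bm + a0)) := by
          have hA : ∀ i ∈ Finset.range (k+1), ρ^(k+1-(i+1)) * uu (i+1) = ρ^(k-i) * (c * BB i) := by
            intro i hi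
            have hik : i ≤ k := Nat.lt_succ_iff.mp (Finset.mem_range.mp hi)
            have h1 : k + 1 - (i + 1) = k - i := by omega
            rw [h1, huu_eval i (le_trans hik hkj)]
          rw [Finset.sum_range_succ' (fun m => ρ^(k+1-m) * uu m) (k+1),
            Finset.sum_congr rfl hA, Nat.sub_zero, huu_zero]
        have hpiece1 : Real.sqrt C4 * (∑ i ∈ Finset.range (k+1), ρ^(k-i) * BB i)
            ≤ ∑ i ∈ Finset.range (k+1), ρ^(k-i) * (c * BB i) := by
          rw [Finset.mul_sum]
          apply Finset.sum_le_sum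
          intro i _
          have hterm := mul_le_mul_of_nonneg_right hcge
            (mul_nonneg (pow_nonneg hρpos.le (k-i)) (hBBnn i))
          calc Real.sqrt C4 * (ρ^(k-i) * BB i) ≤ c * (ρ^(k-i) * BB i) := hterm
            _ = ρ^(k-i) * (c * BB i) := by ring
        have hpiece2 : ρ^(k+1) * (c * (Bm + a0)) = Real.sqrt C4 * (ρ^k * a0 + ρ^k * Bm) := by
          rw [pow_succ, hcdef]
          field_simp
          ring
        have huu_last : 0 ≤ uu (k+2) := huu0 (k+2)
        rw [hwvk]
        calc L2nrm (annAbs k) (fun x ω => jap x ^ (-s) * ψ x ω)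
            ≤ Real.sqrt C4 * (ρ^k * a0 + ρ^k * Bm
                + ∑ i ∈ Finset.range (k+1), ρ^(k-i) * BB i) := hb
          _ = Real.sqrt C4 * (∑ i ∈ Finset.range (k+1), ρ^(k-i) * BB i)
                + Real.sqrt C4 * (ρ^k * a0 + ρ^k * Bm) := by ring
          _ ≤ (∑ i ∈ Finset.range (k+1), ρ^(k-i) * (c * BB i))
                + ρ^(k+1) * (c * (Bm + a0)) := by
              rw [hpiece2]
              exact add_le_add_left hpiece1 _
          _ = ∑ m ∈ Finset.range (k+2), ρ^(k+1-m) * uu m := hsum_eq.symm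
          _ ≤ (∑ m ∈ Finset.range (k+1+1), ρ^(k+1-m) * uu m) + uu (k+1+1) := by
              exact le_add_of_nonneg_right (huu0 _)
      · have hwvk : wv (k+1) = 0 := by
          rw [hwvdef]
          simp only [vecOf]
          rw [if_neg hkj]
        rw [hwvk]
        apply add_nonneg
        · exact Finset.sum_nonneg fun m _ =>
            mul_nonneg (pow_nonneg hρpos.le _) (huu0 m)
        · exact huu0 _
  have hconv_all := HPaux.lpVec_conv p hp (j+2) (by omega) ρ hρpos.le hρlt1 wv uu
    hwv0 huu0 hwvN huuN hconv
  have hdec := HPaux.lpVec_decomp p hp (j+2) (by omega) Vv hVv0 hVvN a0 ha0nn c hcpos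
  rw [← huudef] at hdec
  have heqL : lpL2 p j (fun x ω => jap x ^ (-s) * ψ x ω) = lpVec p wv := rfl
  have heqR : lpL2 p j (fun x ω => jap x ^ (1-s) * pdx ψ x ω) = lpVec p Vv := rfl
  calc lpL2 p j (fun x ω => jap x ^ (-s) * ψ x ω) = lpVec p wv := heqL
    _ ≤ ((1-ρ)⁻¹ + 1) * lpVec p uu := hconv_all
    _ ≤ ((1-ρ)⁻¹ + 1) * (c * (lpVec p Vv + a0)) :=
        mul_le_mul_of_nonneg_left hdec hcoef_nn
    _ = (((1-ρ)⁻¹ + 1) * c) * (a0 + lpVec p Vv) := by ring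
    _ = (((1-ρ)⁻¹ + 1) * c) * (a0 + lpL2 p j (fun x ω => jap x ^ (1-s) * pdx ψ x ω)) := by
        rw [heqR]


end
end
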